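/- arXiv:0810.4726 — 11 statements merged into one kernel-verified Lean document; each statement's English description precedes it below -/
import Mathlib

section
/- Let F be a field of characteristic not 2, and let c₁, c₂ ∈ F be nonzero with c₁ not a square in F. Let D be the quaternion algebra over F with basis 1, i, j, k satisfying i² = c₁, j² = c₂, ij = −ji = k, and let E = F + F·i ⊆ D, which is a quadratic field extension of F. For x = s + t·i ∈ E write x̄ = s − t·i and N(x) = x·x̄ = s² − c₁t². Then: (1) every invertible element of D of the form α + β·j with α, β ∈ E lies in E^×·1·E^× if β = 0, in E^×·j·E^× if α = 0, and in E^×·(1 + x·j)·E^× with x = α^{-1}β if both α, β are nonzero; (2) for α, β, α', β' ∈ E all nonzero, there exist t₁, t₂ ∈ E^× with t₁·(α + β·j)·t₂ = α' + β'·j if and only if N(α)·N(β') = N(α')·N(β). -/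
/-!
Realise `E` as the field `QuadraticAlgebra F c₁ 0`, embedded in `D` by `ω ↦ i`. Since
`j·x = x̄·j` for `x ∈ E`, one has `t₁(α + βj)t₂ = t₁αt₂ + t₁βt̄₂·j`, so `α + βj` and `α' + β'j`
lie in the same double coset iff `t₁αt₂ = α'` and `t₁βt̄₂ = β'` are solvable in `E^×`. Taking
norms gives `N(α)N(β') = N(α')N(β)`. Conversely, `w = αβ'/(α'β)` then has norm one, so by
Hilbert 90 it is `t̄/t` for some `t ∈ E^×`, and `t₂ = t`, `t₁ = α'/(αt)` solve both equations.
-/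

open Quaternion

namespace DoubleCosetQuaternion

variable {F : Type*} [Field F]

/-- The basis element `i` of the quaternion algebra `ℍ[F, c₁, c₂]`. -/
def qi (F : Type*) [Field F] (c₁ c₂ : F) : ℍ[F, c₁, c₂] := ⟨0, 1, 0, 0⟩

/-- The basis element `j` of the quaternion algebra `ℍ[F, c₁, c₂]`. -/
def qj (F : Type*) [Field F] (c₁ c₂ : F) : ℍ[F, c₁, c₂] := ⟨0, 0, 1, 0⟩

/-- The embedding of `E = F + F·i` into `ℍ[F, c₁, c₂]`, where an element `s + t·i` of `E`
is recorded as the pair `(s, t) ∈ F × F`. -/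
def toD (F : Type*) [Field F] (c₁ c₂ : F) (x : F × F) : ℍ[F, c₁, c₂] := ⟨x.1, x.2, 0, 0⟩

/-- The norm `N(s + t·i) = (s + t·i)(s − t·i) = s² − c₁ t²` of an element of `E`. -/
def Nrm (c₁ : F) (x : F × F) : F := x.1 ^ 2 - c₁ * x.2 ^ 2

/-- Multiplication in `E = F[i]`, `i² = c₁`: `(s + t·i)(s' + t'·i) = (ss' + c₁tt') + (st' + ts')·i`. -/
def Emul (c₁ : F) (x y : F × F) : F × F := (x.1 * y.1 + c₁ * x.2 * y.2, x.1 * y.2 + x.2 * y.1)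

/-- Inversion in the field `E = F[i]`. -/
def Einv (c₁ : F) (x : F × F) : F × F := (x.1 / Nrm c₁ x, -x.2 / Nrm c₁ x)

end DoubleCosetQuaternion

namespace QuadraticAlgebra

variable {R : Type*} [CommRing R] {a : R}

theorem exists_ne_zero_star_eq_mul [Nontrivial R] {w : QuadraticAlgebra R a 0} (hw : norm w = 1) :
    ∃ t ≠ 0, star t = w * t := by
  by_cases hw₁ : w = -1
  · refine ⟨ω, fun h => by simpa using congrArg im h, ?_⟩
    ext <;> simp [hw₁]
  · refine ⟨1 + star w, fun h => hw₁ ?_, ?_⟩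
    · simpa using congrArg star (eq_neg_of_add_eq_zero_right h)
    · rw [star_add, star_one, star_star, mul_add, mul_one, ← algebraMap_norm_eq_mul_star, hw,
        map_one, add_comm]

variable {K : Type*} [Field K] {a : K} [Fact (∀ r, r ^ 2 ≠ a + 0 * r)]

theorem norm_div (x y : QuadraticAlgebra K a 0) : norm (x / y) = norm x / norm y := by
  rcases eq_or_ne y 0 with rfl | hy
  · simp
  · rw [eq_div_iff (norm_eq_zero_iff_eq_zero.not.2 hy), ← map_mul, div_mul_cancel₀ _ hy]

theorem exists_mul_mul_eq_and_mul_mul_star_eq_iff {α β α' β' : QuadraticAlgebra K a 0}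
    (hα : α ≠ 0) (hβ : β ≠ 0) (hα' : α' ≠ 0) :
    (∃ t₁ t₂, t₁ ≠ 0 ∧ t₂ ≠ 0 ∧ t₁ * α * t₂ = α' ∧ t₁ * β * star t₂ = β') ↔
      norm α * norm β' = norm α' * norm β := by
  constructor
  · rintro ⟨t₁, t₂, -, -, rfl, rfl⟩
    simp only [map_mul, norm_star]
    ring
  · intro h
    have hw : norm (α * β' / (α' * β)) = 1 := by
      rw [norm_div, map_mul, map_mul, h, div_self]
      simpa [norm_eq_zero_iff_eq_zero] using And.intro hα' hβ
    obtain ⟨t, ht, hstar⟩ := exists_ne_zero_star_eq_mul hw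
    refine ⟨α' / (α * t), t, div_ne_zero hα' (mul_ne_zero hα ht), ht, ?_, ?_⟩
    · field_simp
    · rw [hstar]
      field_simp

end QuadraticAlgebra

namespace DoubleCosetQuaternion

variable {F : Type*} [Field F]

section Embedding

variable (c₁ c₂ : F)

theorem qi_mul_qi : qi F c₁ c₂ * qi F c₁ c₂ = c₁ • 1 + (0 : F) • qi F c₁ c₂ := by
  ext <;> simp [qi]

def toQuaternion : QuadraticAlgebra F c₁ 0 →ₐ[F] ℍ[F, c₁, c₂] :=
  QuadraticAlgebra.lift ⟨qi F c₁ c₂, qi_mul_qi c₁ c₂⟩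

theorem toQuaternion_apply (z : QuadraticAlgebra F c₁ 0) :
    toQuaternion c₁ c₂ z = ⟨z.re, z.im, 0, 0⟩ := by
  ext <;> simp [toQuaternion, qi]

theorem qj_mul_toQuaternion (z : QuadraticAlgebra F c₁ 0) :
    qj F c₁ c₂ * toQuaternion c₁ c₂ z = toQuaternion c₁ c₂ (star z) * qj F c₁ c₂ := by
  ext <;> simp [toQuaternion_apply, qj]

variable {c₁ c₂}

theorem toQuaternion_add_mul_qj_inj {α β α' β' : QuadraticAlgebra F c₁ 0} :
    toQuaternion c₁ c₂ α + toQuaternion c₁ c₂ β * qj F c₁ c₂ =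
        toQuaternion c₁ c₂ α' + toQuaternion c₁ c₂ β' * qj F c₁ c₂ ↔ α = α' ∧ β = β' := by
  simp [toQuaternion_apply, qj, QuaternionAlgebra.ext_iff, QuadraticAlgebra.ext_iff, and_assoc]

theorem toQuaternion_mul_add_mul_qj_mul (t₁ α β t₂ : QuadraticAlgebra F c₁ 0) :
    toQuaternion c₁ c₂ t₁ * (toQuaternion c₁ c₂ α + toQuaternion c₁ c₂ β * qj F c₁ c₂) *
        toQuaternion c₁ c₂ t₂ =
      toQuaternion c₁ c₂ (t₁ * α * t₂) + toQuaternion c₁ c₂ (t₁ * β * star t₂) * qj F c₁ c₂ := by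
  simp only [map_mul, add_mul, mul_add, mul_assoc, qj_mul_toQuaternion]

end Embedding

section Coordinates

def ofProd (c₁ : F) : F × F ≃ QuadraticAlgebra F c₁ 0 := (QuadraticAlgebra.equivProd c₁ 0).symm

variable {c₁ : F}

theorem toD_eq_toQuaternion_ofProd (c₂ : F) (x : F × F) :
    toD F c₁ c₂ x = toQuaternion c₁ c₂ (ofProd c₁ x) := by
  simp [toD, toQuaternion_apply, ofProd]

theorem ofProd_eq_zero {x : F × F} : ofProd c₁ x = 0 ↔ x = 0 := by
  simp [ofProd, QuadraticAlgebra.ext_iff, Prod.ext_iff]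

theorem ofProd_ne_zero {x : F × F} : ofProd c₁ x ≠ 0 ↔ x ≠ 0 := ofProd_eq_zero.not

theorem norm_ofProd (x : F × F) : QuadraticAlgebra.norm (ofProd c₁ x) = Nrm c₁ x := by
  simp [ofProd, QuadraticAlgebra.norm_def, Nrm]
  ring

theorem ofProd_Emul (x y : F × F) : ofProd c₁ (Emul c₁ x y) = ofProd c₁ x * ofProd c₁ y := by
  ext <;> simp [ofProd, Emul]

theorem ofProd_Einv [Fact (∀ r : F, r ^ 2 ≠ c₁ + 0 * r)] (x : F × F) :
    ofProd c₁ (Einv c₁ x) = (ofProd c₁ x)⁻¹ := by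
  ext <;> simp [ofProd, Einv, QuadraticAlgebra.inv_def, ← norm_ofProd] <;> ring

end Coordinates

theorem toD_add_toD_mul_qj_eq_toD_mul {c₁ : F} (c₂ : F) [Fact (∀ r : F, r ^ 2 ≠ c₁ + 0 * r)]
    {α : F × F} (hα : α ≠ 0) (β : F × F) :
    toD F c₁ c₂ α + toD F c₁ c₂ β * qj F c₁ c₂ =
      toD F c₁ c₂ α * (1 + toD F c₁ c₂ (Emul c₁ (Einv c₁ α) β) * qj F c₁ c₂) := by
  have hα' : ofProd c₁ α ≠ 0 := ofProd_ne_zero.2 hα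
  simp only [toD_eq_toQuaternion_ofProd, ofProd_Emul, ofProd_Einv, mul_add, mul_one, ← mul_assoc,
    ← map_mul, mul_inv_cancel_left₀ hα']

theorem double_coset_parametrization_general
    (c₁ c₂ : F)
    (hns : ∀ s : F, s ^ 2 ≠ c₁) :
    (∀ α β : F × F, IsUnit (toD F c₁ c₂ α + toD F c₁ c₂ β * qj F c₁ c₂) →
      (β = 0 → ∃ t₁ t₂ : F × F, t₁ ≠ 0 ∧ t₂ ≠ 0 ∧
        toD F c₁ c₂ α + toD F c₁ c₂ β * qj F c₁ c₂ =
          toD F c₁ c₂ t₁ * 1 * toD F c₁ c₂ t₂) ∧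
      (α = 0 → ∃ t₁ t₂ : F × F, t₁ ≠ 0 ∧ t₂ ≠ 0 ∧
        toD F c₁ c₂ α + toD F c₁ c₂ β * qj F c₁ c₂ =
          toD F c₁ c₂ t₁ * qj F c₁ c₂ * toD F c₁ c₂ t₂) ∧
      (α ≠ 0 → β ≠ 0 → ∃ t₁ t₂ : F × F, t₁ ≠ 0 ∧ t₂ ≠ 0 ∧
        toD F c₁ c₂ α + toD F c₁ c₂ β * qj F c₁ c₂ =
          toD F c₁ c₂ t₁ * (1 + toD F c₁ c₂ (Emul c₁ (Einv c₁ α) β) * qj F c₁ c₂) *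
            toD F c₁ c₂ t₂)) ∧
    (∀ α β α' β' : F × F, α ≠ 0 → β ≠ 0 → α' ≠ 0 → β' ≠ 0 →
      ((∃ t₁ t₂ : F × F, t₁ ≠ 0 ∧ t₂ ≠ 0 ∧
        toD F c₁ c₂ t₁ * (toD F c₁ c₂ α + toD F c₁ c₂ β * qj F c₁ c₂) * toD F c₁ c₂ t₂ =
          toD F c₁ c₂ α' + toD F c₁ c₂ β' * qj F c₁ c₂) ↔
        Nrm c₁ α * Nrm c₁ β' = Nrm c₁ α' * Nrm c₁ β)) := by
  have : Fact (∀ r : F, r ^ 2 ≠ c₁ + 0 * r) := ⟨by simpa using hns⟩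
  have one_ne : ((1 : F), (0 : F)) ≠ 0 := by simp [Prod.ext_iff]
  have toD_zero : toD F c₁ c₂ 0 = 0 := rfl
  have toD_one : toD F c₁ c₂ (1, 0) = 1 := rfl
  refine ⟨fun α β hu => ⟨fun hβ => ?_, fun hα => ?_, fun hα hβ => ?_⟩,
    fun α β α' β' hα hβ hα' _ => ?_⟩
  · subst hβ
    have hα : α ≠ 0 := by
      rintro rfl
      simp [toD_zero] at hu
    exact ⟨α, (1, 0), hα, one_ne, by simp [toD_zero, toD_one]⟩
  · subst hα
    have hβ : β ≠ 0 := by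
      rintro rfl
      simp [toD_zero] at hu
    exact ⟨β, (1, 0), hβ, one_ne, by simp [toD_zero, toD_one]⟩
  · exact ⟨α, (1, 0), hα, one_ne, by rw [toD_one, mul_one, toD_add_toD_mul_qj_eq_toD_mul c₂ hα]⟩
  · simp only [toD_eq_toQuaternion_ofProd, toQuaternion_mul_add_mul_qj_mul,
      toQuaternion_add_mul_qj_inj, ← norm_ofProd,
      ← QuadraticAlgebra.exists_mul_mul_eq_and_mul_mul_star_eq_iff (ofProd_ne_zero.2 hα)
        (ofProd_ne_zero.2 hβ) (ofProd_ne_zero.2 hα'),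
      (ofProd c₁).surjective.exists, ofProd_ne_zero]

/-- Parametrization of the double cosets `E^× \ D^× / E^×` for a quaternion algebra
`D = ℍ[F, c₁, c₂]` and the quadratic subfield `E = F + F·i` (with `c₁` not a square, so that
`E` is a field): (1) an invertible element `α + β·j` (`α, β ∈ E`) lies in `E^×·1·E^×` if
`β = 0`, in `E^×·j·E^×` if `α = 0`, and in `E^×·(1 + α⁻¹β·j)·E^×` if both are nonzero;
(2) for `α, β, α', β'` all nonzero, `α + β·j` and `α' + β'·j` lie in the same double coset
iff `N(α)N(β') = N(α')N(β)`. -/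
theorem double_coset_parametrization
    (h2 : (2 : F) ≠ 0) (c₁ c₂ : F) (hc₁ : c₁ ≠ 0) (hc₂ : c₂ ≠ 0)
    (hns : ∀ s : F, s ^ 2 ≠ c₁) :
    (∀ α β : F × F, IsUnit (toD F c₁ c₂ α + toD F c₁ c₂ β * qj F c₁ c₂) →
      (β = 0 → ∃ t₁ t₂ : F × F, t₁ ≠ 0 ∧ t₂ ≠ 0 ∧
        toD F c₁ c₂ α + toD F c₁ c₂ β * qj F c₁ c₂ =
          toD F c₁ c₂ t₁ * 1 * toD F c₁ c₂ t₂) ∧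
      (α = 0 → ∃ t₁ t₂ : F × F, t₁ ≠ 0 ∧ t₂ ≠ 0 ∧
        toD F c₁ c₂ α + toD F c₁ c₂ β * qj F c₁ c₂ =
          toD F c₁ c₂ t₁ * qj F c₁ c₂ * toD F c₁ c₂ t₂) ∧
      (α ≠ 0 → β ≠ 0 → ∃ t₁ t₂ : F × F, t₁ ≠ 0 ∧ t₂ ≠ 0 ∧
        toD F c₁ c₂ α + toD F c₁ c₂ β * qj F c₁ c₂ =
          toD F c₁ c₂ t₁ * (1 + toD F c₁ c₂ (Emul c₁ (Einv c₁ α) β) * qj F c₁ c₂) *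
            toD F c₁ c₂ t₂)) ∧
    (∀ α β α' β' : F × F, α ≠ 0 → β ≠ 0 → α' ≠ 0 → β' ≠ 0 →
      ((∃ t₁ t₂ : F × F, t₁ ≠ 0 ∧ t₂ ≠ 0 ∧
        toD F c₁ c₂ t₁ * (toD F c₁ c₂ α + toD F c₁ c₂ β * qj F c₁ c₂) * toD F c₁ c₂ t₂ =
          toD F c₁ c₂ α' + toD F c₁ c₂ β' * qj F c₁ c₂) ↔
        Nrm c₁ α * Nrm c₁ β' = Nrm c₁ α' * Nrm c₁ β)) :=
  double_coset_parametrization_general c₁ c₂ hns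

end DoubleCosetQuaternion
end

section
/- Let p be a prime, n ≥ 0 an integer, and t, u ∈ ℤ_p. For (a, b) ∈ ℚ_p × ℚ_p with a² + abt + b²u ≠ 0 define the matrix M(a,b) = [[a + bt, b·p^{−n}], [−b·p^{n}·u, a]] ∈ GL₂(ℚ_p), and set m(a,b) = v_p(a² + abt + b²u) − 2·min{v_p(a), v_p(b) − n} (with v_p(0) = +∞). Then for two such pairs (a,b) and (a',b'), the matrices M(a,b) and M(a',b') lie in the same double coset ℚ_p^× · GL₂(ℤ_p) · g · GL₂(ℤ_p) if and only if m(a,b) = m(a',b'). -/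
/-!
The quantity `‖det g‖ / ‖g‖²`, where `‖g‖` is the largest absolute value of an entry, is unchanged
by scalars and by `GL₂(ℤ_p)` on either side, because this norm is ultrametric and `GL₂(ℤ_p)`
preserves it. Conversely, pivoting on an entry of largest absolute value (the Cartan decomposition)
brings every `g ∈ GL₂(ℚ_p)` to `diag(1, p^m)`, where the quantity is `p^{-m}`; so it is a complete
invariant of the double cosets. For `M(a,b)` the determinant is the norm `a² + abt + b²u`, and as
`t, u ∈ ℤ_p` and `n ≥ 0` the largest entry is `max(|a|, |b| p^n)`; taking valuations turns the
invariant into `m(a,b)`.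
-/

namespace TorusDoubleCoset

/-- The `p`-adic valuation on `ℚ_p` with values in `WithTop ℤ`, sending `0` to `⊤`. -/
noncomputable def vT (p : ℕ) [Fact p.Prime] (x : ℚ_[p]) : WithTop ℤ :=
  open scoped Classical in
  if x = 0 then ⊤ else (x.valuation : WithTop ℤ)

/-- A matrix over `ℚ_p` lies in `GL₂(ℤ_p)`: all entries are `p`-adic integers and the
determinant is a `p`-adic unit. -/
def IsGLZp (p : ℕ) [Fact p.Prime] (k : Matrix (Fin 2) (Fin 2) ℚ_[p]) : Prop :=
  (∀ i j, ‖k i j‖ ≤ 1) ∧ ‖k.det‖ = 1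

/-- The image `M(a,b) = [[a + bt, b p^{−n}], [−b p^{n} u, a]]` of the element `a + bτ` of the
quadratic algebra `E = ℚ_p[τ]`, `τ² = tτ − u`, under the embedding `E → M(2, ℚ_p)` for which
`M(2, ℤ_p) ∩ E = ℤ_p + p^n (ℤ_p + ℤ_p τ)`. -/
noncomputable def Mmat (p : ℕ) [Fact p.Prime] (n : ℕ) (t u : ℤ_[p]) (a b : ℚ_[p]) :
    Matrix (Fin 2) (Fin 2) ℚ_[p] :=
  !![a + b * (t : ℚ_[p]), b * (p : ℚ_[p]) ^ (-(n : ℤ));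
     -(b * (p : ℚ_[p]) ^ (n : ℕ) * (u : ℚ_[p])), a]

open scoped Matrix.Norms.Elementwise

theorem _root_.Matrix.norm_mul_le_of_isUltrametricDist {R : Type*} [NormedRing R]
    [IsUltrametricDist R] {l m n : Type*} [Fintype l] [Fintype m] [Fintype n]
    (A : Matrix l m R) (B : Matrix m n R) : ‖A * B‖ ≤ ‖A‖ * ‖B‖ := by
  refine (Matrix.norm_le_iff (by positivity)).2 fun i j => ?_
  rw [Matrix.mul_apply]
  refine IsUltrametricDist.norm_sum_le_of_forall_le_of_nonneg (by positivity) fun k _ => ?_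
  exact (norm_mul_le _ _).trans (mul_le_mul (Matrix.norm_entry_le_entrywise_sup_norm A)
    (Matrix.norm_entry_le_entrywise_sup_norm B) (norm_nonneg _) (norm_nonneg _))

variable {p : ℕ} [Fact p.Prime]

section Valuation

lemma one_lt_p : (1 : ℝ) < p := mod_cast (Fact.out : p.Prime).one_lt

lemma natCast_p_ne_zero : (p : ℚ_[p]) ≠ 0 := mod_cast (Fact.out : p.Prime).ne_zero

lemma p_zpow_neg_mul_pow (k : ℕ) : (p : ℚ_[p]) ^ (-(k : ℤ)) * (p : ℚ_[p]) ^ k = 1 := by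
  rw [zpow_neg, zpow_natCast, inv_mul_cancel₀ (pow_ne_zero k natCast_p_ne_zero)]

lemma norm_p_pow_le_one (k : ℕ) : ‖(p : ℚ_[p]) ^ k‖ ≤ 1 := by
  rw [Padic.norm_p_pow]
  exact zpow_le_one_of_nonpos₀ one_lt_p.le (by omega)

lemma vT_eq_addValuation (x : ℚ_[p]) : vT p x = Padic.addValuation x := by
  by_cases hx : x = 0 <;> simp [vT, hx]

lemma vT_mul (x y : ℚ_[p]) : vT p (x * y) = vT p x + vT p y := by
  simp only [vT_eq_addValuation, AddValuation.map_mul]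

lemma vT_pow (x : ℚ_[p]) (k : ℕ) : vT p (x ^ k) = k • vT p x := by
  simp only [vT_eq_addValuation, AddValuation.map_pow]

lemma vT_mul_p_pow (x : ℚ_[p]) (k : ℕ) :
    vT p (x * (p : ℚ_[p]) ^ k) = vT p x + ((k : ℤ) : WithTop ℤ) := by
  rw [vT_mul, vT_pow, vT_eq_addValuation (p : ℚ_[p]), Padic.addValuation.apply natCast_p_ne_zero,
    Padic.valuation_p]
  simp

lemma norm_le_norm_iff_vT_le {x y : ℚ_[p]} : ‖x‖ ≤ ‖y‖ ↔ vT p y ≤ vT p x := by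
  rcases eq_or_ne x 0 with rfl | hx
  · simp [vT]
  rcases eq_or_ne y 0 with rfl | hy
  · simp [vT, hx]
  rw [vT, vT, if_neg hx, if_neg hy, Padic.norm_eq_zpow_neg_valuation hx,
    Padic.norm_eq_zpow_neg_valuation hy, zpow_le_zpow_iff_right₀ one_lt_p, neg_le_neg_iff,
    WithTop.coe_le_coe]

lemma norm_eq_norm_iff_vT_eq {x y : ℚ_[p]} : ‖x‖ = ‖y‖ ↔ vT p x = vT p y := by
  rw [le_antisymm_iff, le_antisymm_iff, norm_le_norm_iff_vT_le, norm_le_norm_iff_vT_le, and_comm]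

lemma exists_norm_eq_max_vT_eq_min (x y : ℚ_[p]) :
    ∃ w : ℚ_[p], ‖w‖ = max ‖x‖ ‖y‖ ∧ vT p w = min (vT p x) (vT p y) := by
  rcases le_total ‖y‖ ‖x‖ with h | h
  · exact ⟨x, (max_eq_left h).symm, (min_eq_left (norm_le_norm_iff_vT_le.mp h)).symm⟩
  · exact ⟨y, (max_eq_right h).symm, (min_eq_right (norm_le_norm_iff_vT_le.mp h)).symm⟩

lemma vT_add_two_nsmul_min_eq_iff (X Y A B A' B' : ℚ_[p]) :
    vT p X + 2 • min (vT p A') (vT p B') = vT p Y + 2 • min (vT p A) (vT p B) ↔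
      ‖X‖ * max ‖A'‖ ‖B'‖ ^ 2 = ‖Y‖ * max ‖A‖ ‖B‖ ^ 2 := by
  obtain ⟨w, hw, hvw⟩ := exists_norm_eq_max_vT_eq_min (p := p) A B
  obtain ⟨w', hw', hvw'⟩ := exists_norm_eq_max_vT_eq_min (p := p) A' B'
  rw [← hvw, ← hvw', ← hw, ← hw', ← vT_pow, ← vT_pow, ← vT_mul, ← vT_mul,
    ← norm_eq_norm_iff_vT_eq, norm_mul, norm_mul, norm_pow, norm_pow]

end Valuation

section GLZp

lemma IsGLZp.norm_le_one {k : Matrix (Fin 2) (Fin 2) ℚ_[p]} (hk : IsGLZp p k) : ‖k‖ ≤ 1 :=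
  (Matrix.norm_le_iff zero_le_one).2 hk.1

lemma IsGLZp.of_fin_two {a b c d : ℚ_[p]} (ha : ‖a‖ ≤ 1) (hb : ‖b‖ ≤ 1) (hc : ‖c‖ ≤ 1)
    (hd : ‖d‖ ≤ 1) (hdet : ‖a * d - b * c‖ = 1) : IsGLZp p !![a, b; c, d] := by
  refine ⟨fun i j => ?_, by rwa [Matrix.det_fin_two_of]⟩
  fin_cases i <;> fin_cases j <;> assumption

lemma IsGLZp.mul {k k' : Matrix (Fin 2) (Fin 2) ℚ_[p]} (hk : IsGLZp p k) (hk' : IsGLZp p k') :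
    IsGLZp p (k * k') := by
  refine ⟨fun i j => ?_, by rw [Matrix.det_mul, norm_mul, hk.2, hk'.2, one_mul]⟩
  calc ‖(k * k') i j‖ ≤ ‖k * k'‖ := Matrix.norm_entry_le_entrywise_sup_norm _
    _ ≤ ‖k‖ * ‖k'‖ := Matrix.norm_mul_le_of_isUltrametricDist k k'
    _ ≤ 1 := mul_le_one₀ hk.norm_le_one (norm_nonneg _) hk'.norm_le_one

lemma IsGLZp.inv {k : Matrix (Fin 2) (Fin 2) ℚ_[p]} (hk : IsGLZp p k) : IsGLZp p k⁻¹ := by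
  refine ⟨fun i j => ?_, ?_⟩
  · rw [Matrix.inv_def, Ring.inverse_eq_inv', Matrix.smul_apply, smul_eq_mul, norm_mul,
      norm_inv, hk.2, inv_one, one_mul, Matrix.adjugate_fin_two]
    fin_cases i <;> fin_cases j <;> simpa using hk.1 _ _
  · rw [Matrix.det_nonsing_inv, Ring.inverse_eq_inv', norm_inv, hk.2, inv_one]

lemma IsGLZp.isUnit_det {k : Matrix (Fin 2) (Fin 2) ℚ_[p]} (hk : IsGLZp p k) : IsUnit k.det :=
  isUnit_iff_ne_zero.2 fun h => by simpa [h] using hk.2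

lemma isGLZp_permMatrix (σ : Equiv.Perm (Fin 2)) : IsGLZp p (σ.permMatrix ℚ_[p]) := by
  refine ⟨fun i j => ?_, ?_⟩
  · unfold Equiv.Perm.permMatrix
    rw [PEquiv.toMatrix_apply]
    split_ifs <;> simp
  · rw [Matrix.det_permutation]
    rcases Int.units_eq_one_or (Equiv.Perm.sign σ) with h | h <;> simp [h]

lemma isGLZp_one : IsGLZp p 1 := by
  simpa using isGLZp_permMatrix (p := p) 1

lemma IsGLZp.norm_mul_left {k : Matrix (Fin 2) (Fin 2) ℚ_[p]} (hk : IsGLZp p k)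
    (g : Matrix (Fin 2) (Fin 2) ℚ_[p]) : ‖k * g‖ = ‖g‖ := by
  have hle : ∀ {k : Matrix (Fin 2) (Fin 2) ℚ_[p]} (g), IsGLZp p k → ‖k * g‖ ≤ ‖g‖ :=
    fun g hk => (Matrix.norm_mul_le_of_isUltrametricDist _ g).trans
      (mul_le_of_le_one_left (norm_nonneg g) hk.norm_le_one)
  refine le_antisymm (hle g hk) ?_
  simpa [← Matrix.mul_assoc, Matrix.nonsing_inv_mul _ hk.isUnit_det] using hle (k * g) hk.inv

lemma IsGLZp.norm_mul_right {k : Matrix (Fin 2) (Fin 2) ℚ_[p]} (hk : IsGLZp p k)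
    (g : Matrix (Fin 2) (Fin 2) ℚ_[p]) : ‖g * k‖ = ‖g‖ := by
  have hle : ∀ {k : Matrix (Fin 2) (Fin 2) ℚ_[p]} (g), IsGLZp p k → ‖g * k‖ ≤ ‖g‖ :=
    fun g hk => (Matrix.norm_mul_le_of_isUltrametricDist g _).trans
      (mul_le_of_le_one_right (norm_nonneg g) hk.norm_le_one)
  refine le_antisymm (hle g hk) ?_
  simpa [Matrix.mul_assoc, Matrix.mul_nonsing_inv _ hk.isUnit_det] using hle (g * k) hk.inv

end GLZp

section DoubleCoset

def SameDoubleCoset (g g' : Matrix (Fin 2) (Fin 2) ℚ_[p]) : Prop :=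
  ∃ c k₁ k₂, c ≠ (0 : ℚ_[p]) ∧ IsGLZp p k₁ ∧ IsGLZp p k₂ ∧ g' = c • (k₁ * g * k₂)

variable {g g' g'' : Matrix (Fin 2) (Fin 2) ℚ_[p]}

lemma SameDoubleCoset.of_isGLZp {k₁ k₂ : Matrix (Fin 2) (Fin 2) ℚ_[p]} (hk₁ : IsGLZp p k₁)
    (hk₂ : IsGLZp p k₂) (h : g' = k₁ * g * k₂) : SameDoubleCoset g g' :=
  ⟨1, k₁, k₂, one_ne_zero, hk₁, hk₂, by rw [h, one_smul]⟩

lemma SameDoubleCoset.of_smul {c : ℚ_[p]} (hc : c ≠ 0) (h : g' = c • g) :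
    SameDoubleCoset g g' :=
  ⟨c, 1, 1, hc, isGLZp_one, isGLZp_one, by simp [h]⟩

lemma SameDoubleCoset.symm (h : SameDoubleCoset g g') : SameDoubleCoset g' g := by
  obtain ⟨c, k₁, k₂, hc, hk₁, hk₂, rfl⟩ := h
  refine ⟨c⁻¹, k₁⁻¹, k₂⁻¹, inv_ne_zero hc, hk₁.inv, hk₂.inv, ?_⟩
  simp only [Matrix.mul_smul, Matrix.smul_mul, smul_smul, inv_mul_cancel₀ hc, one_smul,
    ← Matrix.mul_assoc, Matrix.nonsing_inv_mul _ hk₁.isUnit_det, Matrix.one_mul]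
  rw [Matrix.mul_assoc, Matrix.mul_nonsing_inv _ hk₂.isUnit_det, Matrix.mul_one]

lemma SameDoubleCoset.trans (h : SameDoubleCoset g g') (h' : SameDoubleCoset g' g'') :
    SameDoubleCoset g g'' := by
  obtain ⟨c, k₁, k₂, hc, hk₁, hk₂, rfl⟩ := h
  obtain ⟨c', k₁', k₂', hc', hk₁', hk₂', rfl⟩ := h'
  refine ⟨c' * c, k₁' * k₁, k₂ * k₂', mul_ne_zero hc' hc, hk₁'.mul hk₁, hk₂.mul hk₂', ?_⟩
  simp only [Matrix.mul_smul, Matrix.smul_mul, smul_smul, Matrix.mul_assoc]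

lemma SameDoubleCoset.exists_norm_eq (h : SameDoubleCoset g g') :
    ∃ r : ℝ, 0 < r ∧ ‖g'.det‖ = r ^ 2 * ‖g.det‖ ∧ ‖g'‖ = r * ‖g‖ := by
  obtain ⟨c, k₁, k₂, hc, hk₁, hk₂, rfl⟩ := h
  refine ⟨‖c‖, norm_pos_iff.2 hc, ?_, ?_⟩
  · simp [Matrix.det_mul, hk₁.2, hk₂.2]
  · rw [norm_smul, hk₂.norm_mul_right, hk₁.norm_mul_left]

lemma SameDoubleCoset.det_ne_zero (h : SameDoubleCoset g g') (hg : g.det ≠ 0) : g'.det ≠ 0 := by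
  obtain ⟨r, hr, hdet, -⟩ := h.exists_norm_eq
  rw [← norm_ne_zero_iff, hdet]
  exact mul_ne_zero (pow_ne_zero 2 hr.ne') (norm_ne_zero_iff.2 hg)

end DoubleCoset

section Cartan

variable {g g' : Matrix (Fin 2) (Fin 2) ℚ_[p]}

lemma sameDoubleCoset_submatrix (g : Matrix (Fin 2) (Fin 2) ℚ_[p]) (σ τ : Equiv.Perm (Fin 2)) :
    SameDoubleCoset g (g.submatrix σ τ) :=
  .of_isGLZp (isGLZp_permMatrix σ) (isGLZp_permMatrix τ.symm) <| by
    rw [PEquiv.toMatrix_toPEquiv_mul, PEquiv.mul_toMatrix_toPEquiv, Matrix.submatrix_submatrix]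
    rfl

noncomputable def diagPow (p : ℕ) [Fact p.Prime] (m : ℕ) : Matrix (Fin 2) (Fin 2) ℚ_[p] :=
  !![1, 0; 0, (p : ℚ_[p]) ^ m]

lemma exists_sameDoubleCoset_diagPow_of_norm_le_one {e : ℚ_[p]} (he0 : e ≠ 0) (he : ‖e‖ ≤ 1) :
    ∃ m, SameDoubleCoset (diagPow p m) !![1, 0; 0, e] := by
  have hv : 0 ≤ e.valuation := (Padic.norm_le_one_iff_val_nonneg e).1 he
  set m := e.valuation.toNat
  have hpm : (p : ℚ_[p]) ^ m ≠ 0 := pow_ne_zero _ natCast_p_ne_zero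
  have hunit : ‖e / (p : ℚ_[p]) ^ m‖ = 1 := by
    rw [norm_div, Padic.norm_p_pow, Padic.norm_eq_zpow_neg_valuation he0, Int.toNat_of_nonneg hv,
      div_self (zpow_pos (zero_lt_one.trans one_lt_p) _).ne']
  refine ⟨m, .of_isGLZp (k₁ := 1) (k₂ := !![1, 0; 0, e / (p : ℚ_[p]) ^ m]) isGLZp_one
    (.of_fin_two (by simp) (by simp) (by simp) hunit.le (by simpa using hunit)) ?_⟩
  ext i j
  fin_cases i <;> fin_cases j <;> simp [diagPow, mul_div_cancel₀ _ hpm]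

lemma exists_sameDoubleCoset_diagPow_of_entry_eq_one (hint : ∀ i j, ‖g i j‖ ≤ 1)
    (h00 : g 0 0 = 1) (hdet : g.det ≠ 0) : ∃ m, SameDoubleCoset (diagPow p m) g := by
  have hdet_eq : g.det = g 1 1 - g 0 1 * g 1 0 := by rw [Matrix.det_fin_two, h00, one_mul]
  have hdet_le : ‖g.det‖ ≤ 1 := by
    rw [hdet_eq, sub_eq_add_neg]
    refine (IsUltrametricDist.norm_add_le_max _ _).trans (max_le (hint 1 1) ?_)
    rw [norm_neg, norm_mul]
    exact mul_le_one₀ (hint 0 1) (norm_nonneg _) (hint 1 0)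
  obtain ⟨m, hm⟩ := exists_sameDoubleCoset_diagPow_of_norm_le_one hdet hdet_le
  -- the LDU decomposition of `g`, whose diagonal part is `diag(1, det g)`
  refine ⟨m, hm.trans (.of_isGLZp (k₁ := !![1, 0; g 1 0, 1]) (k₂ := !![1, g 0 1; 0, 1])
    (.of_fin_two (by simp) (by simp) (hint 1 0) (by simp) (by simp))
    (.of_fin_two (by simp) (hint 0 1) (by simp) (by simp) (by simp)) ?_)⟩
  ext i j
  fin_cases i <;> fin_cases j <;> simp [h00, hdet_eq]
  ring

lemma exists_sameDoubleCoset_diagPow_of_forall_norm_le (hdet : g.det ≠ 0)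
    (hmax : ∀ i j, ‖g i j‖ ≤ ‖g 0 0‖) : ∃ m, SameDoubleCoset (diagPow p m) g := by
  have h00 : g 0 0 ≠ 0 := by
    intro h
    have hzero : ∀ i j, g i j = 0 := fun i j => norm_le_zero_iff.1 (by simpa [h] using hmax i j)
    simp [Matrix.det_fin_two, hzero] at hdet
  obtain ⟨m, hm⟩ := exists_sameDoubleCoset_diagPow_of_entry_eq_one (g := (g 0 0)⁻¹ • g)
    (fun i j => by
      rw [Matrix.smul_apply, smul_eq_mul, norm_mul, norm_inv]
      exact inv_mul_le_one_of_le₀ (hmax i j) (norm_nonneg _))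
    (inv_mul_cancel₀ h00)
    (by simp [h00, hdet])
  exact ⟨m, hm.trans (.of_smul h00 (by rw [smul_smul, mul_inv_cancel₀ h00, one_smul]))⟩

theorem exists_sameDoubleCoset_diagPow (hdet : g.det ≠ 0) :
    ∃ m, SameDoubleCoset (diagPow p m) g := by
  obtain ⟨⟨i, j⟩, hij⟩ := Finite.exists_max fun ij : Fin 2 × Fin 2 => ‖g ij.1 ij.2‖
  have hswap := sameDoubleCoset_submatrix g (Equiv.swap 0 i) (Equiv.swap 0 j)
  obtain ⟨m, hm⟩ := exists_sameDoubleCoset_diagPow_of_forall_norm_le (hswap.det_ne_zero hdet)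
    fun i' j' => by simpa using hij (Equiv.swap 0 i i', Equiv.swap 0 j j')
  exact ⟨m, hm.trans hswap.symm⟩

noncomputable def cartanInvariant (g : Matrix (Fin 2) (Fin 2) ℚ_[p]) : ℝ :=
  ‖g.det‖ / ‖g‖ ^ 2

lemma SameDoubleCoset.cartanInvariant_eq (h : SameDoubleCoset g g') :
    cartanInvariant g' = cartanInvariant g := by
  obtain ⟨r, hr, hdet, hnorm⟩ := h.exists_norm_eq
  rw [cartanInvariant, cartanInvariant, hdet, hnorm, mul_pow,
    mul_div_mul_left _ _ (pow_ne_zero 2 hr.ne')]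

lemma norm_diagPow (m : ℕ) : ‖diagPow p m‖ = 1 := by
  refine le_antisymm ((Matrix.norm_le_iff zero_le_one).2 fun i j => ?_) ?_
  · fin_cases i <;> fin_cases j <;> simp [diagPow]
    exact inv_le_one_of_one_le₀ (one_le_pow₀ one_lt_p.le)
  · simpa [diagPow] using Matrix.norm_entry_le_entrywise_sup_norm (diagPow p m) (i := 0) (j := 0)

lemma cartanInvariant_diagPow (m : ℕ) :
    cartanInvariant (diagPow p m) = (p : ℝ) ^ (-(m : ℤ)) := by
  rw [cartanInvariant, norm_diagPow, diagPow, Matrix.det_fin_two_of, one_mul, mul_zero, sub_zero,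
    Padic.norm_p_pow, one_pow, div_one]

theorem sameDoubleCoset_iff_cartanInvariant_eq (hg : g.det ≠ 0) (hg' : g'.det ≠ 0) :
    SameDoubleCoset g g' ↔ cartanInvariant g = cartanInvariant g' := by
  refine ⟨fun h => h.cartanInvariant_eq.symm, fun h => ?_⟩
  obtain ⟨m, hm⟩ := exists_sameDoubleCoset_diagPow hg
  obtain ⟨m', hm'⟩ := exists_sameDoubleCoset_diagPow hg'
  have hmm' : m = m' := by
    rw [hm.cartanInvariant_eq, hm'.cartanInvariant_eq, cartanInvariant_diagPow,
      cartanInvariant_diagPow] at h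
    exact_mod_cast neg_injective ((zpow_right_strictMono₀ one_lt_p).injective h)
  subst hmm'
  exact hm.symm.trans hm'

lemma cartanInvariant_eq_iff {g g' : Matrix (Fin 2) (Fin 2) ℚ_[p]} (hg : g.det ≠ 0)
    (hg' : g'.det ≠ 0) :
    cartanInvariant g = cartanInvariant g' ↔ ‖g.det‖ * ‖g'‖ ^ 2 = ‖g'.det‖ * ‖g‖ ^ 2 := by
  have hne : ∀ {g : Matrix (Fin 2) (Fin 2) ℚ_[p]}, g.det ≠ 0 → ‖g‖ ^ 2 ≠ 0 := fun hg =>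
    pow_ne_zero 2 (norm_ne_zero_iff.2 fun h => hg (by simp [h]))
  exact div_eq_div_iff (hne hg) (hne hg')

end Cartan

section Torus

variable (n : ℕ) (t u : ℤ_[p]) (a b : ℚ_[p])

lemma det_Mmat :
    (Mmat p n t u a b).det = a ^ 2 + a * b * (t : ℚ_[p]) + b ^ 2 * (u : ℚ_[p]) := by
  rw [Mmat, Matrix.det_fin_two_of]
  linear_combination (b ^ 2 * (u : ℚ_[p])) * p_zpow_neg_mul_pow (p := p) n

lemma norm_Mmat :
    ‖Mmat p n t u a b‖ = max ‖a‖ ‖b * (p : ℚ_[p]) ^ (-(n : ℤ))‖ := by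
  have hb : ‖b‖ ≤ ‖b * (p : ℚ_[p]) ^ (-(n : ℤ))‖ := by
    rw [norm_mul, Padic.norm_p_zpow, neg_neg, zpow_natCast]
    exact le_mul_of_one_le_right (norm_nonneg b) (one_le_pow₀ one_lt_p.le)
  have hbx : ∀ x : ℚ_[p], ‖x‖ ≤ 1 → ‖b * x‖ ≤ ‖b‖ := fun x hx => by
    rw [norm_mul]; exact mul_le_of_le_one_right (norm_nonneg b) hx
  have hint : ∀ x : ℤ_[p], ‖(x : ℚ_[p])‖ ≤ 1 := fun x => by
    simpa [PadicInt.padic_norm_e_of_padicInt] using x.norm_le_one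
  refine le_antisymm ((Matrix.norm_le_iff (by positivity)).2 fun i j => ?_) (max_le ?_ ?_)
  · fin_cases i <;> fin_cases j <;> simp only [Mmat, Matrix.of_apply, Matrix.cons_val',
      Matrix.cons_val_zero, Matrix.cons_val_one, Matrix.empty_val', Matrix.cons_val_fin_one,
      Fin.zero_eta, Fin.mk_one]
    · exact (IsUltrametricDist.norm_add_le_max _ _).trans
        (max_le_max le_rfl ((hbx _ (hint t)).trans hb))
    · exact le_max_right _ _
    · rw [norm_neg, mul_assoc]
      refine le_max_of_le_right ((hbx _ ?_).trans hb)
      rw [norm_mul]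
      exact mul_le_one₀ (norm_p_pow_le_one n) (norm_nonneg _) (hint u)
    · exact le_max_left _ _
  · simpa [Mmat] using Matrix.norm_entry_le_entrywise_sup_norm (Mmat p n t u a b) (i := 1) (j := 1)
  · simpa [Mmat] using Matrix.norm_entry_le_entrywise_sup_norm (Mmat p n t u a b) (i := 0) (j := 1)

lemma norm_Mmat_eq_mul_max :
    ‖Mmat p n t u a b‖ = ‖(p : ℚ_[p]) ^ (-(n : ℤ))‖ * max ‖a * (p : ℚ_[p]) ^ n‖ ‖b‖ := by
  rw [norm_Mmat, mul_max_of_nonneg _ _ (norm_nonneg _), ← norm_mul, ← norm_mul, mul_comm _ b,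
    mul_left_comm, p_zpow_neg_mul_pow, mul_one]

end Torus

/-- Lemma 4.3 (lemdoublecoset): `M(a,b)` and `M(a',b')` lie in the same double coset
`ℚ_p^× GL₂(ℤ_p) g GL₂(ℤ_p)` if and only if
`m(a,b) = v_p(a² + abt + b²u) − 2 min(v_p(a), v_p(b) − n)` equals `m(a',b')`; the latter
equality of integers is expressed additively in `WithTop ℤ` (after shifting the minima by `n`)
to accommodate `v_p(0) = ⊤`. -/
theorem same_double_coset_iff (p : ℕ) [Fact p.Prime] (n : ℕ) (t u : ℤ_[p])
    (a b a' b' : ℚ_[p])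
    (hab : a ^ 2 + a * b * (t : ℚ_[p]) + b ^ 2 * (u : ℚ_[p]) ≠ 0)
    (hab' : a' ^ 2 + a' * b' * (t : ℚ_[p]) + b' ^ 2 * (u : ℚ_[p]) ≠ 0) :
    (∃ c k₁ k₂, c ≠ (0 : ℚ_[p]) ∧ IsGLZp p k₁ ∧ IsGLZp p k₂ ∧
        Mmat p n t u a' b' = c • (k₁ * Mmat p n t u a b * k₂)) ↔
      vT p (a ^ 2 + a * b * (t : ℚ_[p]) + b ^ 2 * (u : ℚ_[p])) +
          2 • min (vT p a' + ((n : ℤ) : WithTop ℤ)) (vT p b') =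
        vT p (a' ^ 2 + a' * b' * (t : ℚ_[p]) + b' ^ 2 * (u : ℚ_[p])) +
          2 • min (vT p a + ((n : ℤ) : WithTop ℤ)) (vT p b) := by
  have hdet : (Mmat p n t u a b).det ≠ 0 := by rwa [det_Mmat]
  have hdet' : (Mmat p n t u a' b').det ≠ 0 := by rwa [det_Mmat]
  have hq : ‖(p : ℚ_[p]) ^ (-(n : ℤ))‖ ^ 2 ≠ 0 :=
    pow_ne_zero 2 (norm_ne_zero_iff.2 (zpow_ne_zero _ natCast_p_ne_zero))
  change SameDoubleCoset _ _ ↔ _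
  rw [← vT_mul_p_pow, ← vT_mul_p_pow, vT_add_two_nsmul_min_eq_iff,
    sameDoubleCoset_iff_cartanInvariant_eq hdet hdet', cartanInvariant_eq_iff hdet hdet',
    det_Mmat, det_Mmat, norm_Mmat_eq_mul_max, norm_Mmat_eq_mul_max, mul_pow, mul_pow,
    mul_left_comm _ (_ ^ 2), mul_left_comm _ (_ ^ 2), mul_right_inj' hq]

end TorusDoubleCoset
end

section
/- Let p be an odd prime, u an integer that is not a quadratic residue modulo p, and n ≥ 2 an integer. Let R_n = (ℤ/p^nℤ)[X]/(X² − u) and let τ ∈ R_n be the class of X. Let Ω : R_n^× → ℂ^× be a group homomorphism that is trivial on the image of (ℤ/p^nℤ)^× but nontrivial on the subgroup {a + bτ ∈ R_n^× : b ∈ p^{n−1}(ℤ/p^nℤ)}. Then: (i) for every integer k with 0 ≤ k ≤ n−2, the sum of Ω(1 + bτ) over all b ∈ ℤ/p^nℤ with b ∈ p^k(ℤ/p^nℤ) and b ∉ p^{k+1}(ℤ/p^nℤ) equals 0; and (ii) the sum of Ω(1 + bτ) over all nonzero b ∈ p^{n−1}(ℤ/p^nℤ) equals −1. -/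
open Polynomial

/-- `Rq p n u` is `(ℤ/p^nℤ)[X]/(X² − u)`, i.e. `O_E/p^n O_E` for the unramified quadratic
extension `E` of `ℚ_p` obtained by adjoining a square root of the nonresidue `u`. -/
noncomputable abbrev Rq (p n : ℕ) (u : ℤ) : Type :=
  AdjoinRoot (X ^ 2 - C (u : ZMod (p ^ n)))

open scoped Classical in
/-- The character sums of Lemma 4.5 (lemIrUn): for `Ω` a character of
`((ℤ/p^nℤ)[X]/(X²−u))^×` trivial on `(ℤ/p^nℤ)^×` but nontrivial on
`{a + bτ : b ∈ p^{n−1}(ℤ/p^nℤ)}`, (i) the sum of `Ω(1 + bτ)` over `b` of exact `p`-order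
`k ≤ n−2` vanishes, and (ii) the sum of `Ω(1 + bτ)` over nonzero `b ∈ p^{n−1}(ℤ/p^nℤ)`
equals `−1`.  Here `w b` is the unit of `Rq p n u` with underlying element `1 + bτ`. -/
theorem character_sums_inert (p : ℕ) (hp : p.Prime) (hodd : p ≠ 2) (u : ℤ)
    (hu : ¬∃ s : ZMod p, s ^ 2 = (u : ZMod p)) (n : ℕ) (hn : 2 ≤ n) [NeZero (p ^ n)]
    (Ω : (Rq p n u)ˣ →* ℂˣ)
    (hΩtriv : ∀ a : (ZMod (p ^ n))ˣ,
      Ω (Units.map (algebraMap (ZMod (p ^ n)) (Rq p n u)).toMonoidHom a) = 1)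
    (hΩnontriv : ∃ x : (Rq p n u)ˣ,
      (∃ a b : ZMod (p ^ n),
        (x : Rq p n u) = algebraMap (ZMod (p ^ n)) (Rq p n u) a +
          algebraMap (ZMod (p ^ n)) (Rq p n u) b * AdjoinRoot.root _ ∧
        ∃ c, b = (p : ZMod (p ^ n)) ^ (n - 1) * c) ∧ Ω x ≠ 1)
    (w : ZMod (p ^ n) → (Rq p n u)ˣ)
    (hw : ∀ b : ZMod (p ^ n),
      (w b : Rq p n u) = 1 + algebraMap (ZMod (p ^ n)) (Rq p n u) b * AdjoinRoot.root _) :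
    (∀ k : ℕ, k ≤ n - 2 →
      ∑ b : ZMod (p ^ n),
        (if (∃ c, b = (p : ZMod (p ^ n)) ^ k * c) ∧
            ¬(∃ c, b = (p : ZMod (p ^ n)) ^ (k + 1) * c)
          then ((Ω (w b) : ℂˣ) : ℂ) else 0) = 0) ∧
    (∑ b : ZMod (p ^ n),
      (if b ≠ 0 ∧ (∃ c, b = (p : ZMod (p ^ n)) ^ (n - 1) * c)
        then ((Ω (w b) : ℂˣ) : ℂ) else 0)) = -1 := by
  classical
  set A : ZMod (p ^ n) →+* Rq p n u := algebraMap (ZMod (p ^ n)) (Rq p n u) with hAdef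
  set τ : Rq p n u := AdjoinRoot.root (X ^ 2 - C (u : ZMod (p ^ n))) with hτdef
  set U : ZMod (p ^ n) := (u : ZMod (p ^ n)) with hUdef
  -- τ² = u
  have hτ2 : τ ^ 2 = A U := by
    have h := AdjoinRoot.mk_self (f := X ^ 2 - C U)
    have h2 : (AdjoinRoot.mk (X ^ 2 - C U)) (X ^ 2 - C U) = τ ^ 2 - A U := by
      rw [map_sub, map_pow, AdjoinRoot.mk_X, AdjoinRoot.mk_C]
      rw [hAdef, AdjoinRoot.algebraMap_eq]
    rw [h2] at h
    exact sub_eq_zero.mp h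
  -- p^n = 0 and p^{n-1} · p^{n-1} = 0
  have hpn : ((p : ZMod (p ^ n))) ^ n = 0 := by
    rw [← Nat.cast_pow, ZMod.natCast_self]
  have hpq : ((p : ZMod (p ^ n))) ^ (n - 1) * ((p : ZMod (p ^ n))) ^ (n - 1) = 0 := by
    rw [← pow_add, show (n - 1) + (n - 1) = n + (n - 2) by omega, pow_add, hpn, zero_mul]
  -- key multiplicative relation
  have hkeyU : ∀ b d : ZMod (p ^ n), d * d = 0 →
      Ω (w b) * Ω (w d) = Ω (w (b + d * (1 - U * b ^ 2))) := by
    intro b d hdd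
    have hx2 : (U * b * d) * (U * b * d) = 0 := by
      linear_combination (U ^ 2 * b ^ 2) * hdd
    set s : (ZMod (p ^ n))ˣ :=
      ⟨1 + U * b * d, 1 - U * b * d, by linear_combination -hx2, by linear_combination -hx2⟩
      with hsdef
    have hD : A d * A d = 0 := by rw [← map_mul, hdd, map_zero]
    have hunit : w b * w d = Units.map A.toMonoidHom s * w (b + d * (1 - U * b ^ 2)) := by
      apply Units.ext
      rw [Units.val_mul, Units.val_mul, Units.coe_map, hw, hw, hw]
      show (1 + A b * τ) * (1 + A d * τ)
          = A (1 + U * b * d) * (1 + A (b + d * (1 - U * b ^ 2)) * τ)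
      simp only [map_add, map_mul, map_one, map_sub, map_pow]
      linear_combination (A b * A d) * hτ2 + (τ * A U * A b * (A U * (A b) ^ 2 - 1)) * hD
    calc Ω (w b) * Ω (w d) = Ω (w b * w d) := (map_mul Ω _ _).symm
      _ = Ω (Units.map A.toMonoidHom s) * Ω (w (b + d * (1 - U * b ^ 2))) := by
          rw [hunit, map_mul]
      _ = Ω (w (b + d * (1 - U * b ^ 2))) := by rw [hΩtriv s, one_mul]
  -- extract a point of nontriviality
  obtain ⟨x, ⟨a, b', hx, c', hb'⟩, hΩx⟩ := hΩnontriv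
  have ha : IsUnit a := by
    by_contra hna
    have hval : ((a.val : ℕ) : ZMod (p ^ n)) = a := by
      rw [ZMod.natCast_val, ZMod.cast_id]
    have hcop : ¬ Nat.Coprime a.val (p ^ n) := fun h =>
      hna (hval ▸ (ZMod.isUnit_iff_coprime _ _).mpr h)
    have hdvd : p ∣ a.val := by
      by_contra hdv
      exact hcop (Nat.Coprime.pow_right n
        (((Nat.Prime.coprime_iff_not_dvd hp).mpr hdv).symm))
    obtain ⟨t, ht⟩ := hdvd
    have hna2 : a = (p : ZMod (p ^ n)) * (t : ZMod (p ^ n)) := by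
      rw [← hval, ht]; push_cast; ring
    have hxy : (x : Rq p n u) = A (p : ZMod (p ^ n)) *
        (A (t : ZMod (p ^ n)) + A ((p : ZMod (p ^ n)) ^ (n - 2) * c') * τ) := by
      rw [hx, hb', hna2,
        show ((p : ZMod (p ^ n))) ^ (n - 1)
          = (p : ZMod (p ^ n)) * (p : ZMod (p ^ n)) ^ (n - 2) by
            rw [← pow_succ']; congr 1; omega]
      simp only [map_mul, map_add]
      ring
    have hx0 : (x : Rq p n u) ^ n = 0 := by
      rw [hxy, mul_pow, ← map_pow, hpn, map_zero, zero_mul]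
    have h10 : (1 : Rq p n u) = 0 := by
      calc (1 : Rq p n u) = ((x : Rq p n u) * ↑x⁻¹) ^ n := by
            rw [Units.mul_inv, one_pow]
        _ = (x : Rq p n u) ^ n * (↑x⁻¹ : Rq p n u) ^ n := mul_pow _ _ _
        _ = 0 := by rw [hx0, zero_mul]
    have hsub : Subsingleton (Rq p n u) := subsingleton_of_zero_eq_one h10.symm
    exact hΩx (by rw [Units.ext (Subsingleton.elim (x : Rq p n u) ((1 : (Rq p n u)ˣ) : Rq p n u)), map_one])
  -- the distinguished element d₀
  set d₀ : ZMod (p ^ n) := ((ha.unit⁻¹ : (ZMod (p ^ n))ˣ) : ZMod (p ^ n)) * b' with hd₀def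
  have hd₀c : ∃ c, d₀ = (p : ZMod (p ^ n)) ^ (n - 1) * c :=
    ⟨((ha.unit⁻¹ : (ZMod (p ^ n))ˣ) : ZMod (p ^ n)) * c', by rw [hd₀def, hb']; ring⟩
  obtain ⟨c₀, hc₀⟩ := hd₀c
  have hd₀sq : d₀ * d₀ = 0 := by
    rw [hc₀]; linear_combination (c₀ * c₀) * hpq
  have hxfact : x = Units.map A.toMonoidHom ha.unit * w d₀ := by
    apply Units.ext
    rw [Units.val_mul, Units.coe_map, hw, hx]
    have h1 : ((ha.unit : (ZMod (p ^ n))ˣ) : ZMod (p ^ n)) = a := ha.unit_spec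
    have h2 : a * d₀ = b' := by
      rw [hd₀def, ← mul_assoc, ha.mul_val_inv, one_mul]
    show A a + A b' * τ = A ((ha.unit : (ZMod (p ^ n))ˣ) : ZMod (p ^ n)) * (1 + A d₀ * τ)
    rw [h1, ← h2]
    simp only [map_mul]
    ring
  have hχ : Ω (w d₀) ≠ 1 := by
    intro h1
    exact hΩx (by rw [hxfact, map_mul, hΩtriv, h1, mul_one])
  set χ : ℂ := ((Ω (w d₀) : ℂˣ) : ℂ) with hχdef
  have hχ1 : χ ≠ 1 := fun h => hχ (Units.val_eq_one.mp h)
  -- the shift and its inverse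
  have hinv1 : ∀ b : ZMod (p ^ n),
      (b + d₀ * (1 - U * b ^ 2)) - d₀ * (1 - U * (b + d₀ * (1 - U * b ^ 2)) ^ 2) = b := by
    intro b
    linear_combination (2 * U * b * (1 - U * b ^ 2) + U * d₀ * (1 - U * b ^ 2) ^ 2) * hd₀sq
  have hinv2 : ∀ b : ZMod (p ^ n),
      (b - d₀ * (1 - U * b ^ 2)) + d₀ * (1 - U * (b - d₀ * (1 - U * b ^ 2)) ^ 2) = b := by
    intro b
    linear_combination (2 * U * b * (1 - U * b ^ 2) - U * d₀ * (1 - U * b ^ 2) ^ 2) * hd₀sq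
  let e : ZMod (p ^ n) ≃ ZMod (p ^ n) :=
    ⟨fun b => b + d₀ * (1 - U * b ^ 2), fun b => b - d₀ * (1 - U * b ^ 2), hinv1, hinv2⟩
  -- divisibility conditions transfer along the shift
  have hcondφ : ∀ j, j ≤ n - 1 → ∀ b : ZMod (p ^ n),
      ((∃ c, b + d₀ * (1 - U * b ^ 2) = (p : ZMod (p ^ n)) ^ j * c) ↔
        (∃ c, b = (p : ZMod (p ^ n)) ^ j * c)) := by
    intro j hj b
    have hsplit : (p : ZMod (p ^ n)) ^ (n - 1)
        = (p : ZMod (p ^ n)) ^ j * (p : ZMod (p ^ n)) ^ (n - 1 - j) := by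
      rw [← pow_add]; congr 1; omega
    have hφm : b + d₀ * (1 - U * b ^ 2)
        = b + (p : ZMod (p ^ n)) ^ (n - 1) * (c₀ * (1 - U * b ^ 2)) := by
      rw [hc₀]; ring
    rw [hφm]
    set m := c₀ * (1 - U * b ^ 2)
    constructor
    · rintro ⟨c, hc⟩
      exact ⟨c - (p : ZMod (p ^ n)) ^ (n - 1 - j) * m, by linear_combination hc - m * hsplit⟩
    · rintro ⟨c, hc⟩
      exact ⟨c + (p : ZMod (p ^ n)) ^ (n - 1 - j) * m, by linear_combination hc + m * hsplit⟩
  -- the key value identity at the level of ℂ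
  have hFkey : ∀ b : ZMod (p ^ n),
      ((Ω (w (b + d₀ * (1 - U * b ^ 2))) : ℂˣ) : ℂ) = χ * ((Ω (w b) : ℂˣ) : ℂ) := by
    intro b
    have := hkeyU b d₀ hd₀sq
    have hv := congrArg (Units.val) this
    rw [Units.val_mul] at hv
    rw [← hv, hχdef]; ring
  constructor
  · -- part (i)
    intro k hk
    set F : ZMod (p ^ n) → ℂ := fun b =>
      if (∃ c, b = (p : ZMod (p ^ n)) ^ k * c) ∧
          ¬(∃ c, b = (p : ZMod (p ^ n)) ^ (k + 1) * c)
        then ((Ω (w b) : ℂˣ) : ℂ) else 0 with hF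
    have hstep : ∀ b : ZMod (p ^ n), F (e b) = χ * F b := by
      intro b
      show F (b + d₀ * (1 - U * b ^ 2)) = χ * F b
      by_cases hb : (∃ c, b = (p : ZMod (p ^ n)) ^ k * c) ∧
          ¬(∃ c, b = (p : ZMod (p ^ n)) ^ (k + 1) * c)
      · rw [hF]
        simp only []
        rw [if_pos ⟨(hcondφ k (by omega) b).mpr hb.1,
            fun h => hb.2 ((hcondφ (k + 1) (by omega) b).mp h)⟩,
          if_pos hb, hFkey b]
      · rw [hF]
        simp only []
        rw [if_neg, if_neg hb, mul_zero]
        rintro ⟨h1, h2⟩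
        exact hb ⟨(hcondφ k (by omega) b).mp h1,
          fun hh => h2 ((hcondφ (k + 1) (by omega) b).mpr hh)⟩
    have hSS : ∑ b : ZMod (p ^ n), F b = χ * ∑ b : ZMod (p ^ n), F b := by
      conv_lhs => rw [← Equiv.sum_comp e F]
      rw [Finset.mul_sum]
      exact Finset.sum_congr rfl fun b _ => hstep b
    have h0 : (χ - 1) * ∑ b : ZMod (p ^ n), F b = 0 := by linear_combination -hSS
    rcases mul_eq_zero.mp h0 with h | h
    · exact absurd (by linear_combination h) hχ1
    · exact h
  · -- part (ii)
    set f : ZMod (p ^ n) → ℂ := fun b => ((Ω (w b) : ℂˣ) : ℂ) with hf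
    set G : ZMod (p ^ n) → ℂ := fun b =>
      if (∃ c, b = (p : ZMod (p ^ n)) ^ (n - 1) * c) then f b else 0 with hG
    have hstep : ∀ b : ZMod (p ^ n), G (e b) = χ * G b := by
      intro b
      show G (b + d₀ * (1 - U * b ^ 2)) = χ * G b
      by_cases hb : ∃ c, b = (p : ZMod (p ^ n)) ^ (n - 1) * c
      · rw [hG]
        simp only []
        rw [if_pos ((hcondφ (n - 1) le_rfl b).mpr hb), if_pos hb, hf]
        exact hFkey b
      · rw [hG]
        simp only []
        rw [if_neg (fun h => hb ((hcondφ (n - 1) le_rfl b).mp h)), if_neg hb, mul_zero]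
    have hGG : ∑ b : ZMod (p ^ n), G b = χ * ∑ b : ZMod (p ^ n), G b := by
      conv_lhs => rw [← Equiv.sum_comp e G]
      rw [Finset.mul_sum]
      exact Finset.sum_congr rfl fun b _ => hstep b
    have hT0 : ∑ b : ZMod (p ^ n), G b = 0 := by
      have h0 : (χ - 1) * ∑ b : ZMod (p ^ n), G b = 0 := by linear_combination -hGG
      rcases mul_eq_zero.mp h0 with h | h
      · exact absurd (by linear_combination h) hχ1
      · exact h
    have hw0 : w 0 = 1 := by
      apply Units.ext
      rw [hw]
      simp
    have hf0 : f 0 = 1 := by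
      rw [hf]; simp only []
      rw [hw0, map_one, Units.val_one]
    have hsplitsum : ∀ b : ZMod (p ^ n), G b =
        (if b ≠ 0 ∧ (∃ c, b = (p : ZMod (p ^ n)) ^ (n - 1) * c) then f b else 0)
          + (if b = 0 then f b else 0) := by
      intro b
      by_cases h0 : b = 0
      · subst h0
        rw [hG]; simp only []
        have hex : ∃ c, (0 : ZMod (p ^ n)) = (p : ZMod (p ^ n)) ^ (n - 1) * c := ⟨0, by ring⟩
        simp [hG, hex]
      · by_cases hc : ∃ c, b = (p : ZMod (p ^ n)) ^ (n - 1) * c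
        · rw [hG]; simp only []
          rw [if_pos hc, if_pos ⟨h0, hc⟩, if_neg h0, add_zero]
        · rw [hG]; simp only []
          rw [if_neg hc, if_neg (fun h => hc h.2), if_neg h0, add_zero]
    have hTS : (0 : ℂ) =
        (∑ b : ZMod (p ^ n),
          (if b ≠ 0 ∧ (∃ c, b = (p : ZMod (p ^ n)) ^ (n - 1) * c) then f b else 0)) + 1 := by
      calc (0 : ℂ) = ∑ b : ZMod (p ^ n), G b := hT0.symm
        _ = ∑ b : ZMod (p ^ n),
            ((if b ≠ 0 ∧ (∃ c, b = (p : ZMod (p ^ n)) ^ (n - 1) * c) then f b else 0)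
              + (if b = 0 then f b else 0)) := Finset.sum_congr rfl fun b _ => hsplitsum b
        _ = (∑ b : ZMod (p ^ n),
              (if b ≠ 0 ∧ (∃ c, b = (p : ZMod (p ^ n)) ^ (n - 1) * c) then f b else 0))
            + ∑ b : ZMod (p ^ n), (if b = 0 then f b else 0) := Finset.sum_add_distrib
        _ = _ := by
            rw [Finset.sum_ite_eq' Finset.univ (0 : ZMod (p ^ n)) f,
              if_pos (Finset.mem_univ _), hf0]
    linear_combination -hTS
end

section
/- Let p be an odd prime, u an integer that is not a quadratic residue modulo p, and n ≥ 2 an integer. Let R_n = (ℤ/p^nℤ)[X]/(X² − u) and let τ ∈ R_n be the class of X. Let Ω : R_n^× → ℂ^× be a group homomorphism that is trivial on the image of (ℤ/p^nℤ)^× but nontrivial on the subgroup {a + bτ ∈ R_n^× : b ∈ p^{n−1}(ℤ/p^nℤ)}. Then the sum of Ω(a + τ) over all a ∈ p(ℤ/p^nℤ) equals 0. -/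
open Polynomial

open scoped Classical in
/-- The second character-sum identity in the proof of Lemma 4.5 (lemIrUn): for `Ω` a character
of `((ℤ/p^nℤ)[X]/(X²−u))^×` trivial on `(ℤ/p^nℤ)^×` but nontrivial on
`{a + bτ : b ∈ p^{n−1}(ℤ/p^nℤ)}`, the sum of `Ω(a + τ)` over `a ∈ p(ℤ/p^nℤ)` vanishes.
Here `w a` is the unit of `Rq p n u` with underlying element `a + τ`. -/
theorem character_sum_inert_shifted (p : ℕ) (hp : p.Prime) (hodd : p ≠ 2) (u : ℤ)
    (hu : ¬∃ s : ZMod p, s ^ 2 = (u : ZMod p)) (n : ℕ) (hn : 2 ≤ n) [NeZero (p ^ n)]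
    (Ω : (Rq p n u)ˣ →* ℂˣ)
    (hΩtriv : ∀ a : (ZMod (p ^ n))ˣ,
      Ω (Units.map (algebraMap (ZMod (p ^ n)) (Rq p n u)).toMonoidHom a) = 1)
    (hΩnontriv : ∃ x : (Rq p n u)ˣ,
      (∃ a b : ZMod (p ^ n),
        (x : Rq p n u) = algebraMap (ZMod (p ^ n)) (Rq p n u) a +
          algebraMap (ZMod (p ^ n)) (Rq p n u) b * AdjoinRoot.root _ ∧
        ∃ c, b = (p : ZMod (p ^ n)) ^ (n - 1) * c) ∧ Ω x ≠ 1)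
    (w : ZMod (p ^ n) → (Rq p n u)ˣ)
    (hw : ∀ a : ZMod (p ^ n),
      (w a : Rq p n u) = algebraMap (ZMod (p ^ n)) (Rq p n u) a + AdjoinRoot.root _) :
    ∑ a : ZMod (p ^ n),
      (if ∃ c, a = (p : ZMod (p ^ n)) * c then ((Ω (w a) : ℂˣ) : ℂ) else 0) = 0 := by
  classical
  obtain ⟨x, ⟨a₀, b₀, hx, c₀, hb₀⟩, hΩx⟩ := hΩnontriv
  haveI : Fact p.Prime := ⟨hp⟩
  have hn0 : n ≠ 0 := by omega
  set R := Rq p n u with hR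
  set alg : ZMod (p ^ n) →+* R := algebraMap _ _ with halg
  set r : R := AdjoinRoot.root _ with hrdef
  have hpn : (p : ZMod (p ^ n)) ^ n = 0 := by
    rw [← Nat.cast_pow, ZMod.natCast_self]
  have hr2 : r ^ 2 = alg ((u : ZMod (p ^ n))) := by
    have h := AdjoinRoot.mk_self (f := X ^ 2 - C ((u : ℤ) : ZMod (p ^ n)))
    rw [map_sub, map_pow, AdjoinRoot.mk_X, AdjoinRoot.mk_C, sub_eq_zero] at h
    rw [hrdef, halg, AdjoinRoot.algebraMap_eq]
    exact h
  -- reduction mod p to show a₀ is a unit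
  have hpdvd : p ∣ p ^ n := dvd_pow_self p hn0
  set π : ZMod (p ^ n) →+* ZMod p := ZMod.castHom hpdvd (ZMod p) with hπ
  set S := AdjoinRoot (X ^ 2 - C ((u : ℤ) : ZMod p)) with hS
  haveI : Nontrivial S := AdjoinRoot.nontrivial _ (by
    rw [degree_X_pow_sub_C (by norm_num : 0 < 2)]
    norm_num)
  have hρ2 : (AdjoinRoot.root (X ^ 2 - C ((u : ℤ) : ZMod p))) ^ 2
      = algebraMap (ZMod p) S ((u : ℤ) : ZMod p) := by
    have h := AdjoinRoot.mk_self (f := X ^ 2 - C ((u : ℤ) : ZMod p))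
    rw [map_sub, map_pow, AdjoinRoot.mk_X, AdjoinRoot.mk_C, sub_eq_zero] at h
    rw [AdjoinRoot.algebraMap_eq]
    exact h
  have heval : (X ^ 2 - C ((u : ℤ) : ZMod (p ^ n))).eval₂
      ((algebraMap (ZMod p) S).comp π) (AdjoinRoot.root (X ^ 2 - C ((u : ℤ) : ZMod p))) = 0 := by
    rw [eval₂_sub, eval₂_pow, eval₂_X, eval₂_C, RingHom.comp_apply]
    have hπu : π ((u : ℤ) : ZMod (p ^ n)) = ((u : ℤ) : ZMod p) := map_intCast π u
    rw [hπu, hρ2, sub_self]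
  set φ : R →+* S := AdjoinRoot.lift _ _ heval with hφ
  have hφalg : ∀ z : ZMod (p ^ n), φ (alg z) = algebraMap (ZMod p) S (π z) := by
    intro z
    rw [halg, AdjoinRoot.algebraMap_eq, hφ, AdjoinRoot.lift_of, RingHom.comp_apply]
  have hφr : φ r = AdjoinRoot.root _ := by
    rw [hrdef, hφ, AdjoinRoot.lift_root]
  have hπb : π b₀ = 0 := by
    rw [hb₀, map_mul, map_pow, map_natCast, ZMod.natCast_self, zero_pow (by omega : n - 1 ≠ 0),
      zero_mul]
  have hπa : π a₀ ≠ 0 := by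
    intro h0
    have hux : IsUnit (φ (x : R)) := (Units.isUnit x).map φ
    rw [hx, map_add, map_mul, hφalg, hφalg, hφr, hπb, map_zero, zero_mul, add_zero, h0,
      map_zero] at hux
    exact not_isUnit_zero hux
  have ha₀ : IsUnit a₀ := by
    rw [← ZMod.natCast_zmod_val a₀, ZMod.isUnit_iff_coprime]
    apply Nat.Coprime.pow_right
    rw [Nat.coprime_comm]
    rw [Nat.Prime.coprime_iff_not_dvd hp]
    intro hd
    apply hπa
    have h1 : ((a₀.val : ℕ) : ZMod p) = 0 := (ZMod.natCast_eq_zero_iff _ _).mpr hd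
    rw [ZMod.natCast_val] at h1
    rw [hπ, ZMod.castHom_apply]
    exact h1
  set aU : (ZMod (p ^ n))ˣ := ha₀.unit with haU
  have ha₀v : (aU : ZMod (p ^ n)) = a₀ := ha₀.unit_spec
  set v : ZMod (p ^ n) := ((aU⁻¹ : (ZMod (p ^ n))ˣ) : ZMod (p ^ n)) with hv
  have hinv : a₀ * v = 1 := by
    rw [← ha₀v, hv, ← Units.val_mul]
    rw [show aU * aU⁻¹ = 1 from by group]
    rfl
  set t : ZMod (p ^ n) := (u : ZMod (p ^ n)) * b₀ * v with ht
  have hpow : (p : ZMod (p ^ n)) ^ (n - 1) = (p : ZMod (p ^ n)) * (p : ZMod (p ^ n)) ^ (n - 2) := by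
    conv_lhs => rw [show n - 1 = (n - 2) + 1 by omega]
    rw [pow_succ]
    ring
  have htp : ∃ d, t = (p : ZMod (p ^ n)) * d := by
    refine ⟨(u : ZMod (p ^ n)) * ((p : ZMod (p ^ n)) ^ (n - 2) * c₀) * v, ?_⟩
    rw [ht, hb₀, hpow]
    ring
  have hpp : (p : ZMod (p ^ n)) * (p : ZMod (p ^ n)) ^ (n - 1) = 0 := by
    calc (p : ZMod (p ^ n)) * (p : ZMod (p ^ n)) ^ (n - 1)
        = (p : ZMod (p ^ n)) ^ ((n - 1) + 1) := by rw [pow_succ]; ring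
      _ = 0 := by rw [show (n - 1) + 1 = n by omega]; exact hpn
  have hmul0 : ∀ a : ZMod (p ^ n), (∃ d, a = (p : ZMod (p ^ n)) * d) → a * b₀ = 0 := by
    rintro a ⟨d, rfl⟩
    rw [hb₀]
    linear_combination d * c₀ * hpp
  -- the key identity of units
  have key : ∀ a : ZMod (p ^ n), (∃ d, a = (p : ZMod (p ^ n)) * d) →
      w a * x = Units.map alg.toMonoidHom aU * w (a + t) := by
    intro a ha
    have hab : a * b₀ = 0 := hmul0 a ha
    have E1 : alg a * alg b₀ = 0 := by rw [← map_mul, hab, map_zero]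
    have E2 : alg a₀ * alg v = 1 := by rw [← map_mul, hinv, map_one]
    rw [Units.ext_iff, Units.val_mul, Units.val_mul, hw, hw, hx, Units.coe_map]
    show (alg a + r) * (alg a₀ + alg b₀ * r) = alg a₀ * (alg (a + t) + r)
    rw [ht]
    simp only [map_add, map_mul]
    linear_combination (alg b₀) * hr2 + r * E1 -
      (alg ((u : ℤ) : ZMod (p ^ n)) * alg b₀) * E2
  have hΩstep : ∀ a : ZMod (p ^ n), (∃ d, a = (p : ZMod (p ^ n)) * d) →
      Ω (w (a + t)) = Ω (w a) * Ω x := by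
    intro a ha
    have h := congrArg Ω (key a ha)
    rw [map_mul, map_mul, hΩtriv aU, one_mul] at h
    exact h.symm
  obtain ⟨d₀, hd₀⟩ := htp
  have hPiff : ∀ a : ZMod (p ^ n),
      (∃ d, a + t = (p : ZMod (p ^ n)) * d) ↔ (∃ d, a = (p : ZMod (p ^ n)) * d) := by
    intro a
    constructor
    · rintro ⟨d, hd⟩
      exact ⟨d - d₀, by linear_combination hd - hd₀⟩
    · rintro ⟨d, rfl⟩
      exact ⟨d + d₀, by linear_combination hd₀⟩
  set f : ZMod (p ^ n) → ℂ :=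
    fun a => if ∃ c, a = (p : ZMod (p ^ n)) * c then ((Ω (w a) : ℂˣ) : ℂ) else 0 with hf
  show ∑ a : ZMod (p ^ n), f a = 0
  have hsum : ∑ a : ZMod (p ^ n), f a = ∑ a : ZMod (p ^ n), f (a + t) :=
    (Fintype.sum_equiv (Equiv.addRight t) _ _ (fun a => rfl)).symm
  have hstep : ∀ a : ZMod (p ^ n), f (a + t) = ((Ω x : ℂˣ) : ℂ) * f a := by
    intro a
    by_cases hP : ∃ d, a = (p : ZMod (p ^ n)) * d
    · rw [hf]
      simp only
      rw [if_pos ((hPiff a).mpr hP), if_pos hP, hΩstep a hP, Units.val_mul]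
      ring
    · rw [hf]
      simp only
      rw [if_neg (fun h => hP ((hPiff a).mp h)), if_neg hP, mul_zero]
  have hS : (∑ a : ZMod (p ^ n), f a) = ((Ω x : ℂˣ) : ℂ) * ∑ a : ZMod (p ^ n), f a := by
    conv_lhs => rw [hsum]
    rw [Finset.sum_congr rfl (fun a _ => hstep a), ← Finset.mul_sum]
  have hne : ((Ω x : ℂˣ) : ℂ) ≠ 1 := fun h => hΩx (Units.ext h)
  have hz : (((Ω x : ℂˣ) : ℂ) - 1) * ∑ a : ZMod (p ^ n), f a = 0 := by
    linear_combination -hS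
  rcases mul_eq_zero.mp hz with h | h
  · exact absurd (by linear_combination h) hne
  · exact h
end

section
/- Let k ≥ 1 and m be integers with |m| ≤ k − 1, and let α, β ∈ ℂ. In the two-variable polynomial (α·x + conj(β)·y)^{k+m−1} · (−β·x + conj(α)·y)^{k−m−1} over ℂ, the coefficient of the monomial x^{k+m−1} y^{k−m−1} equals the sum over j from 0 to k − |m| − 1 of (−1)^j · binom(k+m−1, j) · binom(k−m−1, j) · α^{k+m−1−j} · conj(α)^{k−m−1−j} · (β·conj(β))^j. -/
open MvPolynomial


open Finset in
private lemma expand_pow_aux (c d : ℂ) (n : ℕ) :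
    ((C c * X (0 : Fin 2) + C d * X 1 : MvPolynomial (Fin 2) ℂ)) ^ n =
      ∑ i ∈ range (n + 1),
        monomial (Finsupp.single (0 : Fin 2) i + Finsupp.single 1 (n - i))
          ((n.choose i : ℂ) * c ^ i * d ^ (n - i)) := by
  rw [add_pow]
  refine Finset.sum_congr rfl fun i _ => ?_
  rw [mul_pow, mul_pow, ← C_pow, ← C_pow, X_pow_eq_monomial, X_pow_eq_monomial,
    C_mul_monomial, C_mul_monomial]
  rw [monomial_mul, mul_comm, ← C_eq_coe_nat, C_mul_monomial]
  ring_nf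

open Finset in
private lemma coeff_key_aux (a b : ℕ) (p q r s : ℂ) :
    MvPolynomial.coeff (Finsupp.single (0 : Fin 2) a + Finsupp.single (1 : Fin 2) b)
      ((C p * X 0 + C q * X 1) ^ a * (C r * X 0 + C s * X 1) ^ b :
        MvPolynomial (Fin 2) ℂ) =
      ∑ j ∈ range (min a b + 1),
        (a.choose j : ℂ) * (b.choose j : ℂ) * p ^ (a - j) * q ^ j * r ^ j * s ^ (b - j) := by
  rw [expand_pow_aux, expand_pow_aux, Finset.sum_mul_sum]
  simp only [monomial_mul, coeff_sum, coeff_monomial]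
  have hcond : ∀ i l : ℕ, i ≤ a → l ≤ b →
      (((Finsupp.single (0 : Fin 2) i + Finsupp.single 1 (a - i)) +
          (Finsupp.single (0 : Fin 2) l + Finsupp.single 1 (b - l)) =
        Finsupp.single (0 : Fin 2) a + Finsupp.single 1 b) ↔ l = a - i ∧ a - i ≤ b) := by
    intro i l hi hl
    rw [Finsupp.ext_iff, Fin.forall_fin_two]
    simp [Finsupp.single_apply]
    omega
  rw [Finset.sum_congr rfl fun i hi => Finset.sum_congr rfl fun l hl =>
    if_congr (hcond i l (Nat.lt_succ_iff.mp (Finset.mem_range.mp hi))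
      (Nat.lt_succ_iff.mp (Finset.mem_range.mp hl))) rfl rfl]
  simp only [ite_and]
  rw [Finset.sum_congr rfl fun i _ => Finset.sum_ite_eq' (range (b+1)) (a - i) _]
  simp only [Finset.mem_range, Nat.lt_succ_iff, ← ite_and, and_self]
  rw [← Finset.sum_range_reflect]
  symm
  have hsub : Finset.range (a ⊓ b + 1) ⊆ Finset.range (a + 1) :=
    Finset.range_subset_range.mpr (by omega)
  rw [← Finset.sum_subset hsub (fun j hj hj' => ?_)]
  · refine Finset.sum_congr rfl fun j hj => ?_
    have hj1 : j ≤ a ⊓ b := Nat.lt_succ_iff.mp (Finset.mem_range.mp hj)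
    have e1 : a + 1 - 1 - j = a - j := by omega
    have e2 : a - (a - j) = j := by omega
    rw [e1, e2, if_pos (by omega), Nat.choose_symm (by omega)]
    ring
  · have h1 : j < a + 1 := Finset.mem_range.mp hj
    have h2 : ¬ j < a ⊓ b + 1 := fun h => hj' (Finset.mem_range.mpr h)
    rw [if_neg (by omega)]

/-- Lemma 4.12 (lemarchfn): in the polynomial
`(α·x + β̄·y)^{k+m-1} · (−β·x + ᾱ·y)^{k-m-1}` over `ℂ`, the coefficient of
`x^{k+m-1} y^{k-m-1}` equals
`Σ_{j=0}^{k-|m|-1} (−1)^j C(k+m−1, j) C(k−m−1, j) α^{k+m−1−j} ᾱ^{k−m−1−j} (β β̄)^j`. -/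
theorem coeff_matrix_coefficient (k m : ℤ) (hk : 1 ≤ k) (hm : |m| ≤ k - 1) (α β : ℂ) :
    MvPolynomial.coeff
      (Finsupp.single (0 : Fin 2) (k + m - 1).toNat +
        Finsupp.single (1 : Fin 2) (k - m - 1).toNat)
      ((C α * X 0 + C (starRingEnd ℂ β) * X 1) ^ (k + m - 1).toNat *
        (C (-β) * X 0 + C (starRingEnd ℂ α) * X 1) ^ (k - m - 1).toNat :
          MvPolynomial (Fin 2) ℂ) =
      ∑ j ∈ Finset.range ((k - |m| - 1).toNat + 1),
        (-1 : ℂ) ^ j * ((k + m - 1).toNat.choose j : ℂ) * ((k - m - 1).toNat.choose j : ℂ) *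
          α ^ ((k + m - 1).toNat - j) * (starRingEnd ℂ α) ^ ((k - m - 1).toNat - j) *
          (β * starRingEnd ℂ β) ^ j := by
  have hmin : (k - |m| - 1).toNat = (k + m - 1).toNat ⊓ (k - m - 1).toNat := by
    rcases abs_cases m with ⟨h1, h2⟩ | ⟨h1, h2⟩ <;> omega
  rw [coeff_key_aux, hmin]
  refine Finset.sum_congr rfl fun j hj => ?_
  rw [mul_pow, neg_pow]
  ring
end

section
/- Let k ≥ 1 and m be integers with |m| ≤ k − 1, and define for real x the quantity P_{k,m}(x) = (1 − x)^{−(k−1)} · Σ_{i=0}^{k−|m|−1} binom(k+m−1, i) · binom(k−m−1, i) · (−x)^i. Then for every real number x ≤ 0 one has 0 ≤ P_{k,m}(x) ≤ binom(2k−2, k+m−1). -/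
lemma choose_sq_sum_le (a b n : ℕ) :
    ∑ i ∈ Finset.range n, a.choose i * b.choose i ≤ (a + b).choose b := by
  have key : ∑ i ∈ Finset.range (b + 1), a.choose i * b.choose i = (a + b).choose b := by
    rw [Nat.add_choose_eq, Finset.Nat.sum_antidiagonal_eq_sum_range_succ
      (fun p q => a.choose p * b.choose q)]
    refine Finset.sum_congr rfl fun i hi => ?_
    rw [Nat.choose_symm (Nat.lt_succ_iff.1 (Finset.mem_range.1 hi))]
  calc ∑ i ∈ Finset.range n, a.choose i * b.choose i
      ≤ ∑ i ∈ Finset.range (max n (b+1)), a.choose i * b.choose i :=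
        Finset.sum_le_sum_of_subset (Finset.range_subset_range.2 (le_max_left _ _))
    _ = ∑ i ∈ Finset.range (b+1), a.choose i * b.choose i := by
        refine (Finset.sum_subset (Finset.range_subset_range.2 (le_max_right _ _)) ?_).symm
        intro i _ hi
        simp only [Finset.mem_range, not_lt, Nat.succ_le_iff] at hi
        simp [Nat.choose_eq_zero_of_lt hi]
    _ = _ := key

/-- The archimedean orbital integral polynomial
`P_{k,m}(x) = (1-x)^{-(k-1)} Σ_{i=0}^{k-|m|-1} C(k+m-1, i) C(k-m-1, i) (-x)^i`
satisfies `0 ≤ P_{k,m}(x) ≤ C(2k-2, k+m-1)` for all real `x ≤ 0`. -/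
theorem orbital_polynomial_bounds (k m : ℤ) (hk : 1 ≤ k) (hm : |m| ≤ k - 1)
    (x : ℝ) (hx : x ≤ 0) :
    0 ≤ (1 - x) ^ (-(k - 1)) *
        ∑ i ∈ Finset.range ((k - |m| - 1).toNat + 1),
          ((k + m - 1).toNat.choose i : ℝ) * ((k - m - 1).toNat.choose i : ℝ) * (-x) ^ i ∧
    (1 - x) ^ (-(k - 1)) *
        ∑ i ∈ Finset.range ((k - |m| - 1).toNat + 1),
          ((k + m - 1).toNat.choose i : ℝ) * ((k - m - 1).toNat.choose i : ℝ) * (-x) ^ i ≤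
      ((2 * k - 2).toNat.choose (k + m - 1).toNat : ℝ) := by
  have habs := abs_nonneg m
  have habs2 : -|m| ≤ m ∧ m ≤ |m| := ⟨neg_abs_le m, le_abs_self m⟩
  set a := (k + m - 1).toNat with ha
  set b := (k - m - 1).toNat with hb
  set N := (k - |m| - 1).toNat with hN
  set K := (k - 1).toNat with hK
  have hx1 : (0:ℝ) ≤ -x := by linarith
  have h1x : (1:ℝ) ≤ 1 - x := by linarith
  have h1xpos : (0:ℝ) < 1 - x := by linarith
  have hKk : (k - 1) = (K : ℤ) := by omega
  have hzpow : (1 - x) ^ (-(k - 1)) = ((1 - x) ^ K)⁻¹ := by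
    rw [hKk, zpow_neg, zpow_natCast]
  have hNK : N ≤ K := by omega
  have hab : (2 * k - 2).toNat = a + b := by omega
  have hchoose : (a + b).choose a = (a + b).choose b := by
    rw [← Nat.choose_symm (Nat.le_add_left b a)]
    congr 1
    omega
  have hS0 : 0 ≤ ∑ i ∈ Finset.range (N + 1),
      ((a.choose i : ℝ)) * ((b.choose i : ℝ)) * (-x) ^ i :=
    Finset.sum_nonneg fun i _ =>
      mul_nonneg (mul_nonneg (Nat.cast_nonneg _) (Nat.cast_nonneg _)) (pow_nonneg hx1 i)
  rw [hzpow, hab, hchoose]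
  constructor
  · exact mul_nonneg (inv_nonneg.2 (pow_nonneg (le_of_lt h1xpos) K)) hS0
  · rw [inv_mul_le_iff₀ (pow_pos h1xpos K), mul_comm]
    calc ∑ i ∈ Finset.range (N + 1), ((a.choose i : ℝ)) * ((b.choose i : ℝ)) * (-x) ^ i
        ≤ ∑ i ∈ Finset.range (N + 1),
            ((a.choose i : ℝ)) * ((b.choose i : ℝ)) * (1 - x) ^ K := by
          refine Finset.sum_le_sum fun i hi => ?_
          refine mul_le_mul_of_nonneg_left ?_
            (mul_nonneg (Nat.cast_nonneg _) (Nat.cast_nonneg _))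
          calc (-x) ^ i ≤ (1 - x) ^ i :=
                pow_le_pow_left₀ hx1 (by linarith) i
            _ ≤ (1 - x) ^ K := pow_le_pow_right₀ h1x
                (le_trans (Nat.lt_succ_iff.1 (Finset.mem_range.1 hi)) hNK)
      _ = (∑ i ∈ Finset.range (N + 1), ((a.choose i : ℝ)) * ((b.choose i : ℝ))) *
            (1 - x) ^ K := by rw [← Finset.sum_mul]
      _ ≤ ((a + b).choose b : ℝ) * (1 - x) ^ K := by
          refine mul_le_mul_of_nonneg_right ?_ (pow_nonneg (le_of_lt h1xpos) K)
          have := choose_sq_sum_le a b (N + 1)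
          calc (∑ i ∈ Finset.range (N + 1), ((a.choose i : ℝ)) * ((b.choose i : ℝ)))
              = ((∑ i ∈ Finset.range (N + 1), a.choose i * b.choose i : ℕ) : ℝ) := by
                push_cast; ring_nf
            _ ≤ _ := Nat.cast_le.2 this
end

section
/- Let F be a totally real number field of degree d over ℚ with ring of integers O_F, let 𝔑 be a nonzero ideal of O_F, let 𝔭₁, …, 𝔭_m be distinct nonzero prime ideals of O_F none of which divides 𝔑, let a ∈ O_F be nonzero, and let r₁, …, r_m, t₁, …, t_m be nonnegative integers. Let S be the set of y ∈ 𝔑 with y ≠ 0 and y ≠ a such that for each i the exact power of 𝔭_i dividing the ideal (y) is r_i and the exact power of 𝔭_i dividing the ideal (y − a) is t_i, and such that |σ(y)| < |σ(a)| for every real embedding σ : F → ℝ. Then the cardinality of S is at most 1 + 2^d · |N_{F/ℚ}(a)| / (N(𝔑) · Π_{i=1}^m N(𝔭_i)^{max(r_i, t_i)}), where N denotes the absolute norm of an ideal and N_{F/ℚ} the field norm. -/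
/-!
Any two points `y, y'` of the set are congruent modulo `𝔞 = 𝔑 ∏ 𝔭ᵢ ^ max rᵢ tᵢ` (the factors are
pairwise comaximal), so a nonzero difference `x = y - y'` has `|N x| ≥ N 𝔞`. At every real place
`|σ x| < 2 |σ a|`, so by the product formula `|σ₀ x| ≥ 2 |σ₀ a| N 𝔞 / (2 ^ d |N a|)` at any fixed
place `σ₀`. Thus `σ₀` maps the set into `[-|σ₀ a|, |σ₀ a|]` with points that far apart, and the
count follows by pigeonhole.
-/

open NumberField

def latticePointSet (F : Type*) [Field F] [NumberField F]
    (𝔑 : Ideal (𝓞 F)) (m : ℕ) (𝔭 : Fin m → Ideal (𝓞 F)) (a : 𝓞 F)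
    (r t : Fin m → ℕ) : Set (𝓞 F) :=
  {y | y ∈ 𝔑 ∧ y ≠ 0 ∧ y ≠ a ∧
    (∀ i, 𝔭 i ^ r i ∣ Ideal.span {y} ∧ ¬𝔭 i ^ (r i + 1) ∣ Ideal.span {y}) ∧
    (∀ i, 𝔭 i ^ t i ∣ Ideal.span {y - a} ∧ ¬𝔭 i ^ (t i + 1) ∣ Ideal.span {y - a}) ∧
    (∀ σ : F →+* ℝ, |σ (algebraMap (𝓞 F) F y)| < |σ (algebraMap (𝓞 F) F a)|)}

open InfinitePlace

theorem Finset.prod_mul_le_mul_prod {ι R : Type*} [CommSemiring R] [PartialOrder R]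
    [IsOrderedRing R] [DecidableEq ι] {s : Finset ι} {i₀ : ι} (hi₀ : i₀ ∈ s) {u v : ι → R}
    (hu : ∀ i ∈ s, 0 ≤ u i) (huv : ∀ i ∈ s, i ≠ i₀ → u i ≤ v i) (hv : 0 ≤ v i₀) :
    (∏ i ∈ s, u i) * v i₀ ≤ u i₀ * ∏ i ∈ s, v i := by
  rw [← mul_prod_erase s u hi₀, ← mul_prod_erase s v hi₀, mul_right_comm, ← mul_assoc]
  have := hu i₀ hi₀
  gcongr with i hi
  · exact fun i hi ↦ hu i (mem_of_mem_erase hi)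
  · exact huv i (mem_of_mem_erase hi) (ne_of_mem_erase hi)

theorem Set.finite_and_ncard_le_of_pairwise_le_abs_sub {α : Type*} {S : Set α} {f : α → ℝ}
    {b c δ : ℝ} (hδ : 0 < δ) (hS : ∀ x ∈ S, f x ∈ Icc b c)
    (hsep : S.Pairwise fun x y ↦ δ ≤ |f x - f y|) :
    S.Finite ∧ S.ncard ≤ ⌊(c - b) / δ⌋₊ + 1 := by
  set k : α → ℕ := fun x ↦ ⌊(f x - b) / δ⌋₊
  have hmaps : MapsTo k S (Finset.range (⌊(c - b) / δ⌋₊ + 1)) := by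
    intro x hx
    simp only [Finset.coe_range, mem_Iio, Nat.lt_add_one_iff, k]
    gcongr
    exact (hS x hx).2
  have hinj : InjOn k S := by
    intro x hx y hy hxy
    by_contra hne
    have hx0 : 0 ≤ (f x - b) / δ := div_nonneg (sub_nonneg.mpr (hS x hx).1) hδ.le
    have hy0 : 0 ≤ (f y - b) / δ := div_nonneg (sub_nonneg.mpr (hS y hy).1) hδ.le
    have hfloor : ⌊(f x - b) / δ⌋ = ⌊(f y - b) / δ⌋ := by
      rw [← Int.natCast_floor_eq_floor hx0, ← Int.natCast_floor_eq_floor hy0]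
      exact congrArg _ hxy
    have hlt := Int.abs_sub_lt_one_of_floor_eq_floor hfloor
    rw [← sub_div, sub_sub_sub_cancel_right, abs_div, abs_of_pos hδ, div_lt_one hδ] at hlt
    exact (hsep hx hy hne).not_gt hlt
  refine ⟨Finite.of_injOn hmaps hinj (Finset.finite_toSet _), ?_⟩
  simpa using ncard_le_ncard_of_injOn k hmaps hinj (Finset.finite_toSet _)

theorem Ideal.sub_mem_pow_max {R : Type*} [CommRing R] {I : Ideal R} {r t : ℕ} {a y y' : R}
    (hy : y ∈ I ^ r) (hy' : y' ∈ I ^ r) (hya : y - a ∈ I ^ t) (hya' : y' - a ∈ I ^ t) :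
    y - y' ∈ I ^ max r t := by
  rcases le_total r t with h | h
  · rw [max_eq_right h, ← sub_sub_sub_cancel_right y y' a]
    exact sub_mem hya hya'
  · rw [max_eq_left h]
    exact sub_mem hy hy'

theorem Ideal.mul_prod_pow_eq_inf_iInf {R ι : Type*} [CommRing R] {𝔑 : Ideal R}
    {𝔭 : ι → Ideal R} (hmax : ∀ i, (𝔭 i).IsMaximal) (hinj : Function.Injective 𝔭)
    (h𝔑 : ∀ i, ¬𝔑 ≤ 𝔭 i) (e : ι → ℕ) (s : Finset ι) :
    𝔑 * ∏ i ∈ s, 𝔭 i ^ e i = 𝔑 ⊓ ⨅ i ∈ s, 𝔭 i ^ e i := by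
  have h𝔑𝔭 (i : ι) : IsCoprime 𝔑 (𝔭 i) := isCoprime_iff_codisjoint.mpr
    ((isMaximal_def.mp (hmax i)).not_le_iff_codisjoint.mp (h𝔑 i)).symm
  have h𝔭𝔭 (i j : ι) (hij : i ≠ j) : IsCoprime (𝔭 i) (𝔭 j) :=
    have := hmax i; have := hmax j; isCoprime_of_isMaximal (hinj.ne hij)
  rw [mul_eq_inf_of_isCoprime (IsCoprime.prod_right fun i _ ↦ (h𝔑𝔭 i).pow_right),
    prod_eq_iInf_of_pairwise_isCoprime fun i _ j _ hij ↦ (h𝔭𝔭 i j hij).pow]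

theorem Ideal.absNorm_le_abs_norm_of_mem {S : Type*} [CommRing S]
    [IsDedekindDomain S] [Module.Free ℤ S] [Module.Finite ℤ S] {I : Ideal S} {x : S}
    (hxI : x ∈ I) (hx : x ≠ 0) : (absNorm I : ℤ) ≤ |Algebra.norm ℤ x| :=
  Int.le_of_dvd (abs_pos.mpr (Algebra.norm_ne_zero_iff.mpr hx))
    ((dvd_abs _ _).mpr (absNorm_dvd_norm_of_mem hxI))

namespace NumberField

theorem isTotallyReal_of_forall_im_eq_zero {K : Type*} [Field K]
    (h : ∀ φ : K →+* ℂ, ∀ x, (φ x).im = 0) : IsTotallyReal K where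
  isReal w := ⟨w.embedding, ComplexEmbedding.isReal_iff.mpr
    (RingHom.ext fun x ↦ Complex.conj_eq_iff_im.mpr (h _ x)), w.mk_embedding⟩

namespace InfinitePlace

variable {K : Type*} [Field K]

theorem abs_embedding_of_isReal {w : InfinitePlace K} (hw : w.IsReal) (x : K) :
    |embedding_of_isReal hw x| = w x := by
  rw [← Real.norm_eq_abs, norm_embedding_of_isReal]

variable [NumberField K] [IsTotallyReal K]

theorem card_eq_finrank_of_isTotallyReal :
    Fintype.card (InfinitePlace K) = Module.finrank ℚ K := by
  rw [card_eq_nrRealPlaces_add_nrComplexPlaces, IsTotallyReal.nrComplexPlaces_eq_zero,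
    add_zero, IsTotallyReal.finrank]

theorem prod_eq_abs_norm_of_isTotallyReal (x : 𝓞 K) :
    ∏ w : InfinitePlace K, w (algebraMap (𝓞 K) K x) = |(Algebra.norm ℤ x : ℝ)| := by
  have := prod_eq_abs_norm (algebraMap (𝓞 K) K x)
  simp only [IsTotallyReal.mult_eq, pow_one] at this
  rw [this, ← Algebra.coe_norm_int]
  push_cast
  rfl

theorem absNorm_mul_le_mul_prod_of_mem {I : Ideal (𝓞 K)} {x : 𝓞 K} (hxI : x ∈ I) (hx : x ≠ 0)
    {w₀ : InfinitePlace K} {B : InfinitePlace K → ℝ}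
    (hB : ∀ w ≠ w₀, w (algebraMap (𝓞 K) K x) ≤ B w) (hB₀ : 0 ≤ B w₀) :
    (Ideal.absNorm I : ℝ) * B w₀ ≤ w₀ (algebraMap (𝓞 K) K x) * ∏ w, B w := by
  classical
  calc (Ideal.absNorm I : ℝ) * B w₀
      ≤ (∏ w : InfinitePlace K, w (algebraMap (𝓞 K) K x)) * B w₀ := by
        rw [prod_eq_abs_norm_of_isTotallyReal]
        gcongr
        exact_mod_cast Ideal.absNorm_le_abs_norm_of_mem hxI hx
    _ ≤ _ := Finset.prod_mul_le_mul_prod (Finset.mem_univ w₀) (fun w _ ↦ apply_nonneg w _)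
        (fun w _ hw ↦ hB w hw) hB₀

end InfinitePlace

end NumberField

section LatticePointSet

variable {F : Type*} [Field F] [NumberField F] {𝔑 : Ideal (𝓞 F)} {m : ℕ}
  {𝔭 : Fin m → Ideal (𝓞 F)} {a : 𝓞 F} {r t : Fin m → ℕ} {y y' : 𝓞 F}

theorem sub_mem_of_mem_latticePointSet (hprime : ∀ i, Prime (𝔭 i))
    (hinj : Function.Injective 𝔭) (hndvd : ∀ i, ¬𝔭 i ∣ 𝔑)
    (hy : y ∈ latticePointSet F 𝔑 m 𝔭 a r t) (hy' : y' ∈ latticePointSet F 𝔑 m 𝔭 a r t) :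
    y - y' ∈ 𝔑 * ∏ i, 𝔭 i ^ max (r i) (t i) := by
  obtain ⟨hy𝔑, -, -, hyr, hyt, -⟩ := hy
  obtain ⟨hy'𝔑, -, -, hy'r, hy't, -⟩ := hy'
  have hmax (i : Fin m) : (𝔭 i).IsMaximal :=
    (Ideal.isPrime_of_prime (hprime i)).isMaximal (hprime i).ne_zero
  rw [Ideal.mul_prod_pow_eq_inf_iInf hmax hinj fun i ↦ mt Ideal.dvd_iff_le.mpr (hndvd i)]
  refine ⟨sub_mem hy𝔑 hy'𝔑, Submodule.mem_iInf _ |>.mpr fun i ↦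
    Submodule.mem_iInf _ |>.mpr fun _ ↦ ?_⟩
  exact Ideal.sub_mem_pow_max (Ideal.dvd_span_singleton.mp (hyr i).1)
    (Ideal.dvd_span_singleton.mp (hy'r i).1) (Ideal.dvd_span_singleton.mp (hyt i).1)
    (Ideal.dvd_span_singleton.mp (hy't i).1)

variable [IsTotallyReal F]

theorem abs_embedding_lt_of_mem_latticePointSet (hy : y ∈ latticePointSet F 𝔑 m 𝔭 a r t)
    (w : InfinitePlace F) :
    |embedding_of_isReal (IsTotallyReal.isReal w) (algebraMap (𝓞 F) F y)| <
      w (algebraMap (𝓞 F) F a) := by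
  rw [← abs_embedding_of_isReal (IsTotallyReal.isReal w)]
  exact hy.2.2.2.2.2 _

theorem place_lt_of_mem_latticePointSet (hy : y ∈ latticePointSet F 𝔑 m 𝔭 a r t)
    (w : InfinitePlace F) : w (algebraMap (𝓞 F) F y) < w (algebraMap (𝓞 F) F a) := by
  simpa only [abs_embedding_of_isReal] using abs_embedding_lt_of_mem_latticePointSet hy w

theorem absNorm_mul_le_of_mem_latticePointSet (hprime : ∀ i, Prime (𝔭 i))
    (hinj : Function.Injective 𝔭) (hndvd : ∀ i, ¬𝔭 i ∣ 𝔑)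
    (hy : y ∈ latticePointSet F 𝔑 m 𝔭 a r t) (hy' : y' ∈ latticePointSet F 𝔑 m 𝔭 a r t)
    (hne : y ≠ y') (w₀ : InfinitePlace F) :
    (Ideal.absNorm (𝔑 * ∏ i, 𝔭 i ^ max (r i) (t i)) : ℝ) * (2 * w₀ (algebraMap (𝓞 F) F a)) ≤
      w₀ (algebraMap (𝓞 F) F (y - y')) *
        (2 ^ Module.finrank ℚ F * |(Algebra.norm ℤ a : ℝ)|) := by
  have hprod : ∏ w : InfinitePlace F, 2 * w (algebraMap (𝓞 F) F a) =
      2 ^ Module.finrank ℚ F * |(Algebra.norm ℤ a : ℝ)| := by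
    rw [Finset.prod_mul_distrib, Finset.prod_const, Finset.card_univ,
      card_eq_finrank_of_isTotallyReal, prod_eq_abs_norm_of_isTotallyReal]
  rw [← hprod]
  refine absNorm_mul_le_mul_prod_of_mem (B := fun w ↦ 2 * w (algebraMap (𝓞 F) F a))
    (sub_mem_of_mem_latticePointSet hprime hinj hndvd hy hy') (sub_ne_zero.mpr hne)
    (fun w _ ↦ ?_) (mul_nonneg zero_le_two (apply_nonneg _ _))
  calc w (algebraMap (𝓞 F) F (y - y'))
      ≤ w (algebraMap (𝓞 F) F y) + w (algebraMap (𝓞 F) F y') := by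
        rw [map_sub]
        exact w.1.sub_le_add _ _
    _ ≤ 2 * w (algebraMap (𝓞 F) F a) := by
        linarith [place_lt_of_mem_latticePointSet hy w, place_lt_of_mem_latticePointSet hy' w]

end LatticePointSet

/-- Lemma 6.1 (claim:size): for a totally real number field `F` of degree `d`, a nonzero ideal
`𝔑`, distinct nonzero primes `𝔭 1, …, 𝔭 m` not dividing `𝔑`, and nonzero `a ∈ O_F`, the set
of `y ∈ 𝔑` with prescribed exact `𝔭 i`-adic valuations of `(y)` and `(y − a)` and with
`|σ(y)| < |σ(a)|` at all real embeddings is finite of cardinality at most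
`1 + 2^d |N_{F/ℚ}(a)| / (N(𝔑) ∏ i N(𝔭 i)^{max(r i, t i)})`. -/
theorem lattice_point_count
    (F : Type*) [Field F] [NumberField F] (d : ℕ) (hd : Module.finrank ℚ F = d)
    (htr : ∀ φ : F →+* ℂ, ∀ y : F, (φ y).im = 0)
    (𝔑 : Ideal (𝓞 F)) (h𝔑 : 𝔑 ≠ ⊥)
    (m : ℕ) (𝔭 : Fin m → Ideal (𝓞 F))
    (hprime : ∀ i, Prime (𝔭 i)) (hinj : Function.Injective 𝔭)
    (hndvd : ∀ i, ¬𝔭 i ∣ 𝔑)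
    (a : 𝓞 F) (ha : a ≠ 0) (r t : Fin m → ℕ) :
    (latticePointSet F 𝔑 m 𝔭 a r t).Finite ∧
    ((latticePointSet F 𝔑 m 𝔭 a r t).ncard : ℝ) ≤
      1 + 2 ^ d * |(Algebra.norm ℤ a : ℝ)| /
        ((Ideal.absNorm 𝔑 : ℝ) * ∏ i, (Ideal.absNorm (𝔭 i) : ℝ) ^ max (r i) (t i)) := by
  have := isTotallyReal_of_forall_im_eq_zero htr
  obtain ⟨w₀⟩ : Nonempty (InfinitePlace F) := inferInstance
  set σ₀ := embedding_of_isReal (IsTotallyReal.isReal w₀)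
  set A := w₀ (algebraMap (𝓞 F) F a)
  set 𝔞 := 𝔑 * ∏ i, 𝔭 i ^ max (r i) (t i)
  set Q := 2 ^ d * |(Algebra.norm ℤ a : ℝ)| / Ideal.absNorm 𝔞
  have hA : 0 < A := w₀.pos_iff.mpr (by simpa using ha)
  have h𝔞 : 0 < (Ideal.absNorm 𝔞 : ℝ) := Nat.cast_pos.mpr <| Nat.pos_of_ne_zero <|
    mt Ideal.absNorm_eq_zero_iff.mp <| mul_ne_zero h𝔑 <|
      Finset.prod_ne_zero_iff.mpr fun i _ ↦ pow_ne_zero _ (hprime i).ne_zero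
  have hQ : 0 < Q := by
    have : (Algebra.norm ℤ a : ℝ) ≠ 0 := by exact_mod_cast Algebra.norm_ne_zero_iff.mpr ha
    positivity
  have hsep : (latticePointSet F 𝔑 m 𝔭 a r t).Pairwise fun y y' ↦
      2 * A / Q ≤ |σ₀ (algebraMap (𝓞 F) F y) - σ₀ (algebraMap (𝓞 F) F y')| := by
    intro y hy y' hy' hne
    have := absNorm_mul_le_of_mem_latticePointSet hprime hinj hndvd hy hy' hne w₀
    rw [← map_sub, ← map_sub, abs_embedding_of_isReal, div_le_iff₀ hQ, mul_div_assoc',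
      le_div_iff₀ h𝔞, ← hd]
    linarith
  obtain ⟨hfin, hcard⟩ := Set.finite_and_ncard_le_of_pairwise_le_abs_sub (by positivity)
    (fun y hy ↦ abs_le.mp (abs_embedding_lt_of_mem_latticePointSet hy w₀).le) hsep
  refine ⟨hfin, ?_⟩
  calc ((latticePointSet F 𝔑 m 𝔭 a r t).ncard : ℝ) ≤ ⌊(A - -A) / (2 * A / Q)⌋₊ + 1 := by
        exact_mod_cast hcard
    _ ≤ Q + 1 := by
        rw [sub_neg_eq_add, ← two_mul, div_div_cancel₀ (by positivity)]
        gcongr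
        exact Nat.floor_le hQ.le
    _ = _ := by simp [Q, 𝔞, add_comm, map_prod]
end

section
/- Let q > 1 be a real number and δ ∈ ℂ. For every integer n ≥ 0, (1/(q+1)) times the integral over x ∈ [−2, 2] of X_n(x)·(1 + q^{1/2}·δ·x + q)·(q+1)/((q^{1/2}+q^{−1/2})² − x²)·√(4−x²)/(2π) with respect to Lebesgue measure equals 1 if n = 0, δ if n = 1, and 0 if n ≥ 2. -/
/-- `X n` is the Satake transform of the characteristic function `f_n` of the double coset
`GL₂(ℤ_p) diag(p^n,1) GL₂(ℤ_p)`, viewed as a function of `x = q^s + q^{-s} = 2 cos θ`: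
`X 0 = 1` and, for `n ≥ 1`,
`X n (2 cos θ) = q^{n/2} (sin((n+1)θ) - q⁻¹ sin((n-1)θ)) / sin θ`,
expressed via Chebyshev polynomials of the second kind. -/
noncomputable def satakeX (q : ℝ) (n : ℕ) (x : ℝ) : ℝ :=
  if n = 0 then 1
  else (Real.sqrt q) ^ n *
    ((Polynomial.Chebyshev.U ℝ (n : ℤ)).eval (x / 2) -
      q⁻¹ * (Polynomial.Chebyshev.U ℝ ((n : ℤ) - 2)).eval (x / 2))

/-!
Put `r = q⁻¹`. Substituting `x = 2 cos θ` turns `μ_q` into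
`2 (q + 1) / (π q) · sin² θ / (1 - 2 r cos 2θ + r²) dθ` on `[0, π]`, and
`U_m (cos θ) sin θ = sin ((m + 1) θ)`. The real part of the Poisson integral formula for `z ↦ z ^ k`
on the unit disc then gives `∫ U_{2k}(x/2) dμ_q = q⁻¹ ^ k`, while the odd `U_m` integrate to `0`
because `μ_q` is even. Hence `∫ X_n dμ_q = [n = 0]`, and the Hecke relations
`√q x X_0 = X_1`, `√q x X_1 = X_2 + (q + 1) X_0`, `√q x X_{n+2} = X_{n+3} + q X_{n+1}`
turn this into `∫ √q x X_n dμ_q = (q + 1) [n = 1]`.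
-/

open Real Set Metric MeasureTheory intervalIntegral Polynomial Polynomial.Chebyshev

lemma IntervalIntegrable.ofReal {f : ℝ → ℝ} {a b : ℝ} {μ : Measure ℝ}
    (hf : IntervalIntegrable f μ a b) : IntervalIntegrable (fun x => (f x : ℂ)) μ a b :=
  ⟨hf.1.ofReal, hf.2.ofReal⟩

lemma integral_eq_zero_of_odd {E : Type*} [NormedAddCommGroup E] [NormedSpace ℝ E] {f : ℝ → E}
    (hf : Function.Odd f) (a : ℝ) : ∫ x in -a..a, f x = 0 := by
  have h := integral_comp_neg (a := -a) (b := a) f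
  simp only [hf _, intervalIntegral.integral_neg, neg_neg] at h
  have h2 : (2 : ℝ) • ∫ x in -a..a, f x = 0 := by
    rw [two_smul]
    nth_rw 1 [← h]
    exact neg_add_cancel _
  exact (smul_eq_zero.mp h2).resolve_left two_ne_zero

lemma integral_comp_two_mul_cos_mul_sqrt_four_sub_sq (g : ℝ → ℝ) :
    ∫ x in (-2)..2, g x * √(4 - x ^ 2) = ∫ θ in 0..π, g (2 * cos θ) * (2 * sin θ) ^ 2 := by
  have hsub := integral_comp_mul_deriv_of_deriv_nonpos (a := 0) (b := π)
    (f := fun θ => 2 * cos θ) (f' := fun θ => -(2 * sin θ)) (g := fun x => g x * √(4 - x ^ 2))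
    (by fun_prop) (fun θ _ => by simpa using (hasDerivAt_cos θ).const_mul 2)
    (fun θ hθ => by
      rw [min_eq_left pi_pos.le, max_eq_right pi_pos.le] at hθ
      simpa using sin_nonneg_of_nonneg_of_le_pi hθ.1.le hθ.2.le)
  simp only [Function.comp_apply, cos_zero, cos_pi, mul_neg, mul_one,
    intervalIntegral.integral_neg] at hsub
  rw [integral_symm, ← hsub, neg_neg]
  refine integral_congr fun θ hθ => ?_
  rw [uIcc_of_le pi_pos.le] at hθ
  have hsin : 0 ≤ 2 * sin θ := by linarith [sin_nonneg_of_nonneg_of_le_pi hθ.1 hθ.2]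
  have h4 : 4 - (2 * cos θ) ^ 2 = (2 * sin θ) ^ 2 := by nlinarith [sin_sq_add_cos_sq θ]
  simp only [h4, sqrt_sq hsin]
  ring

lemma one_sub_two_mul_cos_add_sq_pos {r : ℝ} (hr : |r| < 1) (φ : ℝ) :
    0 < 1 - 2 * r * cos φ + r ^ 2 := by
  have h1 : |r * cos φ| ≤ |r| := by
    rw [abs_mul]; exact mul_le_of_le_one_right (abs_nonneg r) (abs_cos_le_one φ)
  nlinarith [abs_le.mp h1, sq_abs r, abs_nonneg r]

lemma norm_circleMap_zero_one_sub_sq (r φ : ℝ) :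
    ‖circleMap 0 1 φ - r‖ ^ 2 = 1 - 2 * r * cos φ + r ^ 2 := by
  rw [← Complex.normSq_eq_norm_sq, Complex.normSq_apply]
  simp [circleMap, Complex.exp_ofReal_mul_I_re, Complex.exp_ofReal_mul_I_im]
  nlinarith [sin_sq_add_cos_sq φ]

lemma continuous_cos_nat_mul_div_poisson {r : ℝ} (hr : |r| < 1) (k : ℕ) :
    Continuous fun φ => cos (k * φ) / (1 - 2 * r * cos φ + r ^ 2) :=
  (by fun_prop : Continuous fun φ : ℝ => cos (k * φ)).div (by fun_prop)
    fun φ => (one_sub_two_mul_cos_add_sq_pos hr φ).ne'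

theorem integral_cos_nat_mul_div_poisson {r : ℝ} (hr : |r| < 1) (k : ℕ) :
    ∫ φ in 0..2 * π, cos (k * φ) / (1 - 2 * r * cos φ + r ^ 2) = 2 * π * r ^ k / (1 - r ^ 2) := by
  have hpoisson := ((differentiable_pow k).diffContOnCl (s := ball (0 : ℂ) 1)
    ).circleAverage_poissonKernel_smul' (w := (r : ℂ)) (by simpa using hr)
  simp only [circleAverage_def, sub_zero, norm_circleMap_zero_one_sub_sq, norm_circleMap_zero,
    abs_one, Complex.norm_real, Real.norm_eq_abs, sq_abs, one_pow] at hpoisson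
  have hint : IntervalIntegrable (fun φ : ℝ => ((1 - r ^ 2) / (1 - 2 * r * cos φ + r ^ 2)) •
      circleMap 0 1 φ ^ k) volume 0 (2 * π) :=
    ((continuous_const.div (by fun_prop) fun φ => (one_sub_two_mul_cos_add_sq_pos hr φ).ne').smul
      (by fun_prop)).intervalIntegrable _ _
  have hre := congrArg Complex.re hpoisson
  rw [Complex.smul_re, ← Complex.reCLM_apply, ← Complex.reCLM.intervalIntegral_comp_comm hint,
    ← Complex.ofReal_pow, Complex.ofReal_re, smul_eq_mul] at hre
  have hpt : ∀ φ : ℝ,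
      Complex.reCLM (((1 - r ^ 2) / (1 - 2 * r * cos φ + r ^ 2)) • circleMap 0 1 φ ^ k)
        = (1 - r ^ 2) * (cos (k * φ) / (1 - 2 * r * cos φ + r ^ 2)) := fun φ => by
    rw [Complex.reCLM_apply, Complex.smul_re, circleMap_zero, Complex.ofReal_one, one_mul,
      ← Complex.exp_nat_mul, ← mul_assoc, ← Complex.ofReal_natCast, ← Complex.ofReal_mul,
      Complex.exp_ofReal_mul_I_re, smul_eq_mul]
    ring
  simp only [hpt, intervalIntegral.integral_const_mul] at hre
  have h1 : 0 < 1 - r ^ 2 := by nlinarith [sq_abs r, abs_nonneg r]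
  field_simp at hre ⊢
  linarith

theorem integral_sin_mul_sin_div_poisson {r : ℝ} (hr : |r| < 1) (k : ℕ) :
    ∫ θ in 0..π, sin ((2 * k + 1) * θ) * sin θ / (1 - 2 * r * cos (2 * θ) + r ^ 2)
      = π * r ^ k / (2 * (1 + r)) := by
  have hprod : ∀ θ, sin ((2 * k + 1) * θ) * sin θ / (1 - 2 * r * cos (2 * θ) + r ^ 2)
      = (cos (k * (2 * θ)) / (1 - 2 * r * cos (2 * θ) + r ^ 2)
        - cos ((k + 1 : ℕ) * (2 * θ)) / (1 - 2 * r * cos (2 * θ) + r ^ 2)) / 2 := fun θ => by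
    have h1 : (k : ℝ) * (2 * θ) = (2 * k + 1) * θ - θ := by ring
    have h2 : ((k + 1 : ℕ) : ℝ) * (2 * θ) = (2 * k + 1) * θ + θ := by push_cast; ring
    rw [h1, h2, cos_sub, cos_add]
    ring
  simp only [hprod, intervalIntegral.integral_div]
  rw [integral_comp_mul_left (fun φ => cos (k * φ) / (1 - 2 * r * cos φ + r ^ 2)
      - cos ((k + 1 : ℕ) * φ) / (1 - 2 * r * cos φ + r ^ 2)) two_ne_zero,
    integral_sub ((continuous_cos_nat_mul_div_poisson hr k).intervalIntegrable _ _)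
      ((continuous_cos_nat_mul_div_poisson hr (k + 1)).intervalIntegrable _ _),
    mul_zero, integral_cos_nat_mul_div_poisson hr, integral_cos_nat_mul_div_poisson hr]
  have h1 : 0 < 1 + r := by linarith [neg_abs_le r]
  have h2 : 0 < 1 - r := by linarith [le_abs_self r]
  rw [← sub_div, show 2 * π * r ^ k - 2 * π * r ^ (k + 1) = 2 * π * r ^ k * (1 - r) by ring,
    show (1 : ℝ) - r ^ 2 = (1 + r) * (1 - r) by ring, mul_div_mul_right _ _ h2.ne', smul_eq_mul]
  field_simp

/-- `μ_q = plancherelDensity q x dx` on `[-2, 2]`. -/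
noncomputable def plancherelDensity (q x : ℝ) : ℝ :=
  (q + 1) / ((√q + (√q)⁻¹) ^ 2 - x ^ 2) * (√(4 - x ^ 2) / (2 * π))

lemma sqrt_add_inv_sqrt_sq_sub_sq_two_mul_cos {q : ℝ} (hq : 0 < q) (θ : ℝ) :
    (√q + (√q)⁻¹) ^ 2 - (2 * cos θ) ^ 2 = q * (1 - 2 * q⁻¹ * cos (2 * θ) + q⁻¹ ^ 2) := by
  have hs : √q ^ 2 = q := sq_sqrt hq.le
  have hs0 : √q ≠ 0 := (sqrt_pos.mpr hq).ne'
  rw [cos_two_mul]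
  field_simp
  rw [hs]
  ring

theorem integral_mul_plancherelDensity {q : ℝ} (hq : 0 < q) (f : ℝ → ℝ) :
    ∫ x in (-2)..2, f x * plancherelDensity q x
      = 2 * (q + 1) / (π * q) *
        ∫ θ in 0..π, f (2 * cos θ) * sin θ ^ 2 / (1 - 2 * q⁻¹ * cos (2 * θ) + q⁻¹ ^ 2) := by
  calc ∫ x in (-2)..2, f x * plancherelDensity q x
      = ∫ x in (-2)..2, f x * (q + 1) / ((√q + (√q)⁻¹) ^ 2 - x ^ 2) / (2 * π) * √(4 - x ^ 2) := by
        refine integral_congr fun x _ => ?_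
        simp only [plancherelDensity]
        ring
    _ = _ := integral_comp_two_mul_cos_mul_sqrt_four_sub_sq _
    _ = _ := by
        rw [← intervalIntegral.integral_const_mul]
        refine integral_congr fun θ _ => ?_
        rw [sqrt_add_inv_sqrt_sq_sub_sq_two_mul_cos hq]
        generalize 1 - 2 * q⁻¹ * cos (2 * θ) + q⁻¹ ^ 2 = P
        field_simp

theorem integral_chebyshevU_two_mul_mul_plancherelDensity {q : ℝ} (hq : 1 < q) (k : ℕ) :
    ∫ x in (-2)..2, (U ℝ (2 * k : ℕ)).eval (x / 2) * plancherelDensity q x = q⁻¹ ^ k := by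
  have hq0 : 0 < q := by linarith
  have hr : |q⁻¹| < 1 := by rw [abs_inv, abs_of_pos hq0]; exact inv_lt_one_of_one_lt₀ hq
  rw [integral_mul_plancherelDensity hq0]
  have hU : ∀ θ, (U ℝ (2 * k : ℕ)).eval (2 * cos θ / 2) * sin θ ^ 2
      = sin ((2 * k + 1) * θ) * sin θ := fun θ => by
    rw [mul_div_cancel_left₀ _ two_ne_zero, sq, ← mul_assoc, U_real_cos]
    push_cast; ring_nf
  simp only [hU, integral_sin_mul_sin_div_poisson hr]
  field_simp

lemma plancherelDensity_neg (q x : ℝ) : plancherelDensity q (-x) = plancherelDensity q x := by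
  simp only [plancherelDensity, neg_sq]

theorem integral_chebyshevU_mul_plancherelDensity_of_odd (q : ℝ) {m : ℕ} (hm : Odd m) :
    ∫ x in (-2)..2, (U ℝ m).eval (x / 2) * plancherelDensity q x = 0 :=
  integral_eq_zero_of_odd (fun x => by
    rw [neg_div, U_eval_neg, Int.negOnePow_odd _ (by exact_mod_cast hm), plancherelDensity_neg]
    push_cast; ring) 2

lemma two_lt_sqrt_add_inv_sqrt {q : ℝ} (hq : 1 < q) : 2 < √q + (√q)⁻¹ := by
  have hs : 1 < √q := by rwa [lt_sqrt zero_le_one, one_pow]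
  have hs0 : 0 < √q := by linarith
  rw [← sub_pos, show √q + (√q)⁻¹ - 2 = (√q - 1) ^ 2 / √q by field_simp; ring]
  exact div_pos (pow_pos (by linarith) 2) hs0

theorem intervalIntegrable_mul_plancherelDensity {q : ℝ} (hq : 1 < q) {f : ℝ → ℝ}
    (hf : Continuous f) :
    IntervalIntegrable (fun x => f x * plancherelDensity q x) volume (-2) 2 := by
  refine (hf.continuousOn.mul ?_).intervalIntegrable
  refine ((continuousOn_const.div (by fun_prop) fun x hx => ?_).mul (by fun_prop))
  rw [uIcc_of_le (by norm_num)] at hx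
  have hx2 : x ^ 2 ≤ 2 ^ 2 := sq_le_sq' hx.1 hx.2
  nlinarith [two_lt_sqrt_add_inv_sqrt hq]

lemma satakeX_one (q x : ℝ) : satakeX q 1 x = √q * x := by
  norm_num [satakeX, U_one, mul_div_cancel₀ _ (two_ne_zero' ℝ)]

lemma satakeX_add_two (q : ℝ) (n : ℕ) (x : ℝ) :
    satakeX q (n + 2) x
      = √q ^ (n + 2) * ((U ℝ (n + 2 : ℕ)).eval (x / 2) - q⁻¹ * (U ℝ n).eval (x / 2)) := by
  simp [satakeX]

@[fun_prop]
lemma continuous_satakeX (q : ℝ) (n : ℕ) : Continuous (satakeX q n) := by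
  unfold satakeX
  split_ifs <;> fun_prop

theorem integral_satakeX_mul_plancherelDensity {q : ℝ} (hq : 1 < q) (n : ℕ) :
    ∫ x in (-2)..2, satakeX q n x * plancherelDensity q x = if n = 0 then 1 else 0 := by
  have hU (m : ℕ) := intervalIntegrable_mul_plancherelDensity hq
    (f := fun x => (U ℝ m).eval (x / 2)) (by fun_prop)
  match n with
  | 0 => simpa [satakeX] using integral_chebyshevU_two_mul_mul_plancherelDensity hq 0
  | 1 =>
    simpa [satakeX_one] using integral_eq_zero_of_odd
      (f := fun x => √q * x * plancherelDensity q x) (fun x => by simp [plancherelDensity_neg]) 2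
  | n + 2 =>
    simp only [satakeX_add_two, mul_assoc, sub_mul, Nat.add_eq_zero_iff, OfNat.ofNat_ne_zero,
      and_false, if_false]
    rw [intervalIntegral.integral_const_mul, integral_sub (hU _) ((hU n).const_mul _),
      intervalIntegral.integral_const_mul]
    rcases Nat.even_or_odd' n with ⟨k, rfl | rfl⟩
    · rw [show 2 * k + 2 = 2 * (k + 1) by ring,
        integral_chebyshevU_two_mul_mul_plancherelDensity hq,
        integral_chebyshevU_two_mul_mul_plancherelDensity hq]
      ring
    · rw [integral_chebyshevU_mul_plancherelDensity_of_odd q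
          ((odd_two_mul_add_one k).add_even even_two),
        integral_chebyshevU_mul_plancherelDensity_of_odd q (odd_two_mul_add_one k)]
      ring

lemma mul_eval_chebyshevU_half (m : ℤ) (x : ℝ) :
    x * (U ℝ m).eval (x / 2) = (U ℝ (m + 1)).eval (x / 2) + (U ℝ (m - 1)).eval (x / 2) := by
  rw [U_add_one]
  simp only [eval_sub, eval_mul, eval_ofNat, eval_X]
  ring

lemma sqrt_mul_mul_satakeX_zero (q x : ℝ) : √q * x * satakeX q 0 x = satakeX q 1 x := by
  rw [satakeX_one]
  simp [satakeX]

lemma sqrt_mul_mul_satakeX_one {q : ℝ} (hq : 0 < q) (x : ℝ) :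
    √q * x * satakeX q 1 x = satakeX q 2 x + (q + 1) * satakeX q 0 x := by
  have hs : √q ^ 2 = q := sq_sqrt hq.le
  rw [satakeX_one, satakeX_add_two q 0, show √q * x * (√q * x) = √q ^ 2 * x ^ 2 by ring, hs]
  simp only [satakeX, if_true, Nat.cast_ofNat, U_two, Nat.cast_zero, U_zero, eval_sub, eval_mul,
    eval_ofNat, eval_pow, eval_X, eval_one, zero_add]
  field_simp
  ring

lemma sqrt_mul_mul_satakeX_add_two {q : ℝ} (hq : 0 < q) (n : ℕ) (x : ℝ) :
    √q * x * satakeX q (n + 2) x = satakeX q (n + 3) x + q * satakeX q (n + 1) x := by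
  have hs : √q ^ 2 = q := sq_sqrt hq.le
  have h1 := mul_eval_chebyshevU_half (n + 2) x
  have h2 := mul_eval_chebyshevU_half n x
  simp only [satakeX, Nat.add_eq_zero_iff, OfNat.ofNat_ne_zero, one_ne_zero, and_false, if_false]
  push_cast
  rw [show (n : ℤ) + 2 - 1 = n + 1 by ring] at h1
  rw [show (n : ℤ) + 2 - 2 = n by ring, show (n : ℤ) + 3 - 2 = n + 1 by ring,
    show (n : ℤ) + 1 - 2 = n - 1 by ring, show (n : ℤ) + 3 = n + 2 + 1 by ring]
  linear_combination √q ^ (n + 3) * h1 - √q ^ (n + 3) * q⁻¹ * h2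
    + √q ^ (n + 1) * ((U ℝ (n + 1)).eval (x / 2) - q⁻¹ * (U ℝ (n - 1)).eval (x / 2)) * hs

theorem integral_sqrt_mul_mul_satakeX_mul_plancherelDensity {q : ℝ} (hq : 1 < q) (n : ℕ) :
    ∫ x in (-2)..2, √q * x * satakeX q n x * plancherelDensity q x
      = if n = 1 then q + 1 else 0 := by
  have hq0 : 0 < q := by linarith
  have hX (m : ℕ) := intervalIntegrable_mul_plancherelDensity hq (continuous_satakeX q m)
  match n with
  | 0 => simpa [sqrt_mul_mul_satakeX_zero] using integral_satakeX_mul_plancherelDensity hq 1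
  | 1 =>
    simp only [sqrt_mul_mul_satakeX_one hq0, add_mul (satakeX q 2 _), mul_assoc]
    rw [integral_add (hX _) ((hX _).const_mul _), intervalIntegral.integral_const_mul,
      integral_satakeX_mul_plancherelDensity hq, integral_satakeX_mul_plancherelDensity hq]
    simp
  | n + 2 =>
    simp only [sqrt_mul_mul_satakeX_add_two hq0, add_mul, mul_assoc]
    rw [integral_add (hX _) ((hX _).const_mul q), intervalIntegral.integral_const_mul,
      integral_satakeX_mul_plancherelDensity hq, integral_satakeX_mul_plancherelDensity hq]
    simp

/-- First identity of Corollary 5.2 evaluated on the Hecke basis `{f_n}`: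
`(1/(q+1)) ∫ X_n(x) (1 + q^{1/2} δ x + q) dμ_q(x)` equals `1` if `n = 0`, `δ` if `n = 1`,
and `0` if `n ≥ 2`. -/
theorem ramified_measure_hecke_basis (q : ℝ) (hq : 1 < q) (δ : ℂ) (n : ℕ) :
    (1 / ((q : ℂ) + 1)) *
        ∫ x in (-2 : ℝ)..2,
          (satakeX q n x : ℂ) * (1 + (Real.sqrt q : ℂ) * δ * (x : ℂ) + (q : ℂ)) *
            ((((q + 1) / ((Real.sqrt q + (Real.sqrt q)⁻¹) ^ 2 - x ^ 2)) : ℝ) : ℂ) *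
            (((Real.sqrt (4 - x ^ 2) / (2 * Real.pi)) : ℝ) : ℂ) =
      if n = 0 then 1 else if n = 1 then δ else 0 := by
  have hX := intervalIntegrable_mul_plancherelDensity hq (continuous_satakeX q n)
  have hxX := intervalIntegrable_mul_plancherelDensity hq (f := fun x => √q * x * satakeX q n x)
    (by fun_prop)
  rw [integral_congr (g := fun x => (q + 1 : ℂ) * ((satakeX q n x * plancherelDensity q x : ℝ) : ℂ)
      + δ * ((√q * x * satakeX q n x * plancherelDensity q x : ℝ) : ℂ))
      fun x _ => by simp only [plancherelDensity]; push_cast; ring,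
    integral_add (hX.ofReal.const_mul _) (hxX.ofReal.const_mul δ),
    intervalIntegral.integral_const_mul, intervalIntegral.integral_const_mul, integral_ofReal,
    integral_ofReal, integral_satakeX_mul_plancherelDensity hq,
    integral_sqrt_mul_mul_satakeX_mul_plancherelDensity hq]
  have hq1 : (q : ℂ) + 1 ≠ 0 := by exact_mod_cast (by linarith : q + 1 ≠ 0)
  rcases n with _ | _ | n <;> simp <;> field_simp
end

section
/- Let q > 1 be a real number. For every integer n ≥ 0, the integral over x ∈ [−2, 2] of X_n(x)·√(4−x²)/(2π) with respect to Lebesgue measure equals 1 if n = 0, equals −1 if n = 2, and equals 0 for all other n. -/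
/-! Under `x = 2 cos θ` the Sato–Tate measure becomes `(2/π) sin² θ dθ` and
`U_k(cos θ) sin θ = sin((k+1)θ)`, so the Chebyshev polynomials `U_k(x/2)`, `k ≥ 0`, are
orthonormal for it and integrate to `δ_{k,0}` (also for `k = -1`, where `U_{-1} = 0`).
Since `X_n = q^{n/2} (U_n - q⁻¹ U_{n-2})`, only `n = 0` (through `U_0`) and `n = 2`
(through `-q⁻¹ q U_0`) contribute. -/

open Real Polynomial.Chebyshev intervalIntegral

theorem integral_cos_intCast_mul_zero_pi (c : ℤ) :
    ∫ θ in (0 : ℝ)..π, cos (c * θ) = if c = 0 then π else 0 := by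
  split_ifs with hc
  · simp [hc]
  · have hc' : (c : ℝ) ≠ 0 := Int.cast_ne_zero.mpr hc
    simp [integral_comp_mul_left cos hc', sin_int_mul_pi]

theorem integral_sin_natCast_mul_mul_sin_natCast_mul (m : ℕ) {n : ℕ} (hn : n ≠ 0) :
    ∫ θ in (0 : ℝ)..π, sin (m * θ) * sin (n * θ) = if m = n then π / 2 else 0 := by
  have product_to_sum : ∀ θ : ℝ, sin (m * θ) * sin (n * θ) =
      (cos (((m : ℤ) - n : ℤ) * θ) - cos (((m : ℤ) + n : ℤ) * θ)) / 2 := fun θ => by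
    push_cast
    rw [sub_mul, add_mul, cos_sub, cos_add]
    ring
  simp_rw [product_to_sum]
  rw [integral_div, integral_sub (Continuous.intervalIntegrable (by fun_prop) _ _)
    (Continuous.intervalIntegrable (by fun_prop) _ _), integral_cos_intCast_mul_zero_pi,
    integral_cos_intCast_mul_zero_pi, if_neg (show (m : ℤ) + n ≠ 0 by omega)]
  simp only [sub_eq_zero, Nat.cast_inj, sub_zero]
  split_ifs <;> simp

theorem integral_comp_two_cos {g : ℝ → ℝ} (hg : Continuous g) :
    ∫ x in (-2 : ℝ)..2, g x = ∫ θ in (0 : ℝ)..π, g (2 * cos θ) * (2 * sin θ) := by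
  have hderiv : ∀ θ ∈ Set.uIcc 0 π, HasDerivAt (fun θ => 2 * cos θ) (-(2 * sin θ)) θ :=
    fun θ _ => by simpa using (hasDerivAt_cos θ).const_mul 2
  have := integral_comp_mul_deriv hderiv (by fun_prop) hg
  simp only [Function.comp_apply, cos_zero, cos_pi, mul_one, mul_neg, integral_neg] at this
  rw [integral_symm 2 (-2), ← this, neg_neg]

theorem sqrt_four_sub_two_mul_cos_sq {θ : ℝ} (h0 : 0 ≤ θ) (hπ : θ ≤ π) :
    √(4 - (2 * cos θ) ^ 2) = 2 * sin θ := by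
  rw [show 4 - (2 * cos θ) ^ 2 = (2 * sin θ) ^ 2 by nlinarith [sin_sq_add_cos_sq θ],
    sqrt_sq (by linarith [sin_nonneg_of_nonneg_of_le_pi h0 hπ])]

theorem integral_chebyshevU_mul_satoTate (k : ℤ) (hk : -1 ≤ k) :
    ∫ x in (-2 : ℝ)..2, (U ℝ k).eval (x / 2) * (√(4 - x ^ 2) / (2 * π)) =
      if k = 0 then 1 else 0 := by
  obtain ⟨m, rfl⟩ : ∃ m : ℕ, k = m - 1 := ⟨(k + 1).toNat, by omega⟩
  rw [integral_comp_two_cos (by fun_prop)]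
  have hsubst : ∀ θ ∈ Set.uIcc 0 π,
      (U ℝ (m - 1 : ℤ)).eval (2 * cos θ / 2) * (√(4 - (2 * cos θ) ^ 2) / (2 * π)) * (2 * sin θ) =
        2 / π * (sin (m * θ) * sin ((1 : ℕ) * θ)) := fun θ hθ => by
    rw [Set.uIcc_of_le pi_pos.le] at hθ
    rw [sqrt_four_sub_two_mul_cos_sq hθ.1 hθ.2, mul_div_cancel_left₀ _ two_ne_zero]
    have := U_real_cos θ (m - 1)
    push_cast at this
    rw [sub_add_cancel] at this
    push_cast
    rw [← this]
    field_simp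
  rw [integral_congr hsubst, integral_const_mul,
    integral_sin_natCast_mul_mul_sin_natCast_mul m one_ne_zero]
  split_ifs <;> first | omega | simp

/-- Second identity of Corollary 5.2 evaluated on the Hecke basis `{f_n}`:
the integral of `X_n` against the Sato–Tate measure `√(4-x²)/(2π) dx` on `[-2,2]`
equals `1` if `n = 0`, `-1` if `n = 2`, and `0` otherwise. -/
theorem satoTate_hecke_basis (q : ℝ) (hq : 1 < q) (n : ℕ) :
    ∫ x in (-2 : ℝ)..2, satakeX q n x * (Real.sqrt (4 - x ^ 2) / (2 * Real.pi)) =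
      if n = 0 then 1 else if n = 2 then -1 else 0 := by
  rcases eq_or_ne n 0 with rfl | hn
  · simpa [satakeX] using integral_chebyshevU_mul_satoTate 0 (by norm_num)
  have hsplit : ∀ x, satakeX q n x * (√(4 - x ^ 2) / (2 * π)) =
      √q ^ n * ((U ℝ n).eval (x / 2) * (√(4 - x ^ 2) / (2 * π))) -
        √q ^ n * q⁻¹ * ((U ℝ (n - 2 : ℤ)).eval (x / 2) * (√(4 - x ^ 2) / (2 * π))) := fun x => by
    rw [satakeX, if_neg hn]
    ring
  simp_rw [hsplit]
  rw [integral_sub (Continuous.intervalIntegrable (by fun_prop) _ _)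
      (Continuous.intervalIntegrable (by fun_prop) _ _), integral_const_mul, integral_const_mul,
    integral_chebyshevU_mul_satoTate n (by omega),
    integral_chebyshevU_mul_satoTate (n - 2) (by omega)]
  rcases eq_or_ne n 2 with rfl | h2
  · norm_num [sq_sqrt (by linarith : (0 : ℝ) ≤ q), (by linarith : q ≠ 0)]
  · simp [hn, h2, show (n : ℤ) - 2 ≠ 0 by omega]
end

section
/- For every real number q > 1, the integral over x ∈ [−2, 2] of (1/((1 + q^{−1})² − x²·q^{−1}))·√(4−x²)/(2π) with respect to Lebesgue measure equals q/(q+1). -/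
/-!
Write `D = (1 + t)² - t x² = (1 - t)² + t (4 - x²)`. Since `D - (1 - t)² = t (4 - x²)`,
`√(4 - x²) / D = (1 / √(4 - x²) - (1 - t)² / (D √(4 - x²))) / t`, and both pieces have arcsine
primitives: `arcsin (x / 2)` and `arcsin ((1 - t) x / (2 √D)) / (1 - t²)`. For `0 < t < 1` both
arcsine arguments run from `-1` to `1` over `[-2, 2]`, so the integral is
`(π - (1 - t) / (1 + t) π) / t = 2π / (1 + t)`. Taking `t = q⁻¹` gives the total mass
`(2π)⁻¹ · 2π / (1 + q⁻¹) = q / (q + 1)`.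
-/

open Real

noncomputable section

def arcsinArg (t x : ℝ) : ℝ := (1 - t) * x / (2 * √((1 + t) ^ 2 - t * x ^ 2))

def sqrtDivPrimitive (t x : ℝ) : ℝ :=
  (arcsin (x / 2) - (1 - t) / (1 + t) * arcsin (arcsinArg t x)) / t

end

section

variable {t x : ℝ}

lemma one_add_sq_sub_mul_sq_pos (ht : 0 ≤ t) (hx : x ^ 2 < 4) : 0 < (1 + t) ^ 2 - t * x ^ 2 := by
  nlinarith [sq_nonneg (1 - t), mul_nonneg ht (sub_nonneg.2 hx.le)]

lemma one_add_sq_sub_mul_sq_pos_of_ne_one (ht : 0 ≤ t) (ht1 : t ≠ 1) (hx : x ^ 2 ≤ 4) :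
    0 < (1 + t) ^ 2 - t * x ^ 2 := by
  nlinarith [sq_pos_of_ne_zero (sub_ne_zero.2 ht1), mul_nonneg ht (sub_nonneg.2 hx)]

lemma hasDerivAt_arcsin_div_two (hx : x ^ 2 < 4) :
    HasDerivAt (fun y => arcsin (y / 2)) (1 / √(4 - x ^ 2)) x := by
  have h := (hasDerivAt_arcsin (x := x / 2) (by nlinarith) (by nlinarith)).comp x
    ((hasDerivAt_id x).div_const 2)
  refine h.congr_deriv ?_
  rw [show 1 - (x / 2) ^ 2 = (4 - x ^ 2) / 2 ^ 2 by ring, sqrt_div' _ (by positivity),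
    sqrt_sq zero_le_two]
  field_simp

lemma hasDerivAt_arcsinArg (hD : 0 < (1 + t) ^ 2 - t * x ^ 2) :
    HasDerivAt (arcsinArg t)
      ((1 - t) * (1 + t) ^ 2 /
        (2 * ((1 + t) ^ 2 - t * x ^ 2) * √((1 + t) ^ 2 - t * x ^ 2))) x := by
  have hsqrt : HasDerivAt (fun y => √((1 + t) ^ 2 - t * y ^ 2))
      (-(t * (2 * x)) / (2 * √((1 + t) ^ 2 - t * x ^ 2))) x := by
    refine HasDerivAt.sqrt ?_ hD.ne'
    simpa using ((hasDerivAt_pow 2 x).const_mul t).const_sub ((1 + t) ^ 2)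
  have hr : 0 < √((1 + t) ^ 2 - t * x ^ 2) := sqrt_pos.2 hD
  refine (((hasDerivAt_id x).const_mul (1 - t)).div (hsqrt.const_mul 2)
    (by positivity)).congr_deriv ?_
  have hr2 := sq_sqrt hD.le
  simp only [id]
  field_simp
  linear_combination -((1 - t) * t * x ^ 2) * hr2

lemma one_sub_arcsinArg_sq (hD : 0 < (1 + t) ^ 2 - t * x ^ 2) :
    1 - arcsinArg t x ^ 2 = (1 + t) ^ 2 * (4 - x ^ 2) / (4 * ((1 + t) ^ 2 - t * x ^ 2)) := by
  rw [arcsinArg, div_pow, mul_pow, mul_pow, sq_sqrt hD.le]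
  field_simp
  ring

lemma hasDerivAt_arcsin_arcsinArg (ht : 0 ≤ t) (hx : x ^ 2 < 4) :
    HasDerivAt (fun y => arcsin (arcsinArg t y))
      ((1 - t) * (1 + t) / (((1 + t) ^ 2 - t * x ^ 2) * √(4 - x ^ 2))) x := by
  have hD := one_add_sq_sub_mul_sq_pos ht hx
  have hg : 0 < 1 - arcsinArg t x ^ 2 := by rw [one_sub_arcsinArg_sq hD]; positivity
  have h := (hasDerivAt_arcsin (x := arcsinArg t x) (by nlinarith) (by nlinarith)).comp x
    (hasDerivAt_arcsinArg hD)
  refine h.congr_deriv ?_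
  rw [one_sub_arcsinArg_sq hD, sqrt_div' _ (by positivity), sqrt_mul' _ (by linarith),
    sqrt_mul' _ hD.le, sqrt_sq (by linarith), show (4 : ℝ) = 2 ^ 2 by norm_num,
    sqrt_sq zero_le_two]
  field_simp

lemma hasDerivAt_sqrtDivPrimitive (ht : 0 < t) (hx : x ^ 2 < 4) :
    HasDerivAt (sqrtDivPrimitive t) (√(4 - x ^ 2) / ((1 + t) ^ 2 - t * x ^ 2)) x := by
  refine (((hasDerivAt_arcsin_div_two hx).sub
    ((hasDerivAt_arcsin_arcsinArg ht.le hx).const_mul ((1 - t) / (1 + t)))).div_const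
      t).congr_deriv ?_
  have hD := one_add_sq_sub_mul_sq_pos ht.le hx
  have hs : 0 < √(4 - x ^ 2) := sqrt_pos.2 (by linarith)
  have hs2 : √(4 - x ^ 2) ^ 2 = 4 - x ^ 2 := sq_sqrt (by linarith)
  have hD' : (1 + t) ^ 2 - x ^ 2 * t ≠ 0 := by rw [mul_comm]; exact hD.ne'
  field_simp
  linear_combination -t * hs2

lemma continuousOn_sqrtDivPrimitive (ht : 0 ≤ t) (ht1 : t ≠ 1) :
    ContinuousOn (sqrtDivPrimitive t) (Set.Icc (-2) 2) := by
  have hD : ∀ x ∈ Set.Icc (-2 : ℝ) 2, √((1 + t) ^ 2 - t * x ^ 2) ≠ 0 := fun x hx =>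
    (sqrt_pos.2 (one_add_sq_sub_mul_sq_pos_of_ne_one ht ht1 (by nlinarith [hx.1, hx.2]))).ne'
  have harg : ContinuousOn (arcsinArg t) (Set.Icc (-2) 2) :=
    ContinuousOn.div (by fun_prop) (by fun_prop) fun x hx => mul_ne_zero two_ne_zero (hD x hx)
  unfold sqrtDivPrimitive
  exact ((continuous_arcsin.comp_continuousOn (by fun_prop)).sub
    (continuousOn_const.mul (continuous_arcsin.comp_continuousOn harg))).div_const t

lemma arcsinArg_neg : arcsinArg t (-x) = -arcsinArg t x := by
  simp only [arcsinArg, neg_sq]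
  ring

lemma arcsinArg_two (ht : t < 1) : arcsinArg t 2 = 1 := by
  rw [arcsinArg, show (1 + t) ^ 2 - t * 2 ^ 2 = (1 - t) ^ 2 by ring, sqrt_sq (by linarith)]
  field_simp [(by linarith : (1 - t) ≠ 0)]

theorem integral_sqrt_four_sub_sq_div (ht0 : 0 < t) (ht1 : t < 1) :
    ∫ x in (-2 : ℝ)..2, √(4 - x ^ 2) / ((1 + t) ^ 2 - t * x ^ 2) = 2 * π / (1 + t) := by
  have hint : IntervalIntegrable (fun x => √(4 - x ^ 2) / ((1 + t) ^ 2 - t * x ^ 2))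
      MeasureTheory.volume (-2) 2 := by
    refine ContinuousOn.intervalIntegrable_of_Icc (by norm_num)
      (ContinuousOn.div (by fun_prop) (by fun_prop) fun x hx => ?_)
    exact (one_add_sq_sub_mul_sq_pos_of_ne_one ht0.le ht1.ne (by nlinarith [hx.1, hx.2])).ne'
  rw [intervalIntegral.integral_eq_sub_of_hasDerivAt_of_le (by norm_num)
    (continuousOn_sqrtDivPrimitive ht0.le ht1.ne)
    (fun x hx => hasDerivAt_sqrtDivPrimitive ht0 (by nlinarith [hx.1, hx.2])) hint]
  have h2 := arcsinArg_two ht1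
  have hm2 : arcsinArg t (-2) = -1 := by rw [arcsinArg_neg, h2]
  norm_num [sqrtDivPrimitive, h2, hm2]
  field_simp
  ring

end

/-- The total mass of the measure `μ_{𝔭,E,Ω}` at an inert prime of residue cardinality `q`
equals `q/(q+1) = L(1, η_𝔭)`. -/
theorem total_mass_inert_measure (q : ℝ) (hq : 1 < q) :
    ∫ x in (-2 : ℝ)..2,
        (1 / ((1 + q⁻¹) ^ 2 - x ^ 2 * q⁻¹)) * (Real.sqrt (4 - x ^ 2) / (2 * Real.pi)) =
      q / (q + 1) := by
  have hq0 : 0 < q := by linarith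
  calc _ = (2 * π)⁻¹ * ∫ x in (-2 : ℝ)..2, √(4 - x ^ 2) / ((1 + q⁻¹) ^ 2 - q⁻¹ * x ^ 2) := by
        rw [← intervalIntegral.integral_const_mul]
        congr 1
        ext x
        ring
    _ = q / (q + 1) := by
        rw [integral_sqrt_four_sub_sq_div (inv_pos.2 hq0) (inv_lt_one_of_one_lt₀ hq)]
        field_simp
end

section
/- Let F ⊆ E be number fields with E a quadratic extension of F, with rings of integers O_F and O_E, and let 𝔞 be a nonzero ideal of O_F. Then the number of ideals 𝔟 of O_E whose relative norm N_{E/F}(𝔟) equals 𝔞 is at most σ₀(N(𝔞))^{[F:ℚ]}, where N(𝔞) is the absolute norm of 𝔞 and σ₀(x) denotes the number of positive divisors of the positive integer x. -/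
open NumberField

/-! Since `[E : F] = 2`, at most two primes of `E` lie over a prime `𝔭` of `F`. Hence an ideal `𝔟`
with `N_{E/F}(𝔟) = 𝔞` is determined by its exponents at one chosen prime `Q 𝔭` above each `𝔭 ∣ 𝔞`:
if `𝔟, 𝔟'` agree there, cancel `gcd(𝔟, 𝔟')`; the coprime cofactors still have equal norms, so a
prime dividing one of them forces a different prime over the same `𝔭` dividing the other, and then
`Q 𝔭` is one of the two and divides both. The exponent at `Q 𝔭` is at most `v_𝔭(𝔞)`, giving at most
`∏_{𝔭 ∣ 𝔞} (v_𝔭(𝔞) + 1)` ideals `𝔟`. Finally `v_𝔭(𝔞) ≤ v_p(N 𝔞)` for `𝔭 ∣ p`, and at most `[F : ℚ]`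
primes of `F` lie over `p`, which bounds this product by `σ₀(N 𝔞) ^ [F : ℚ]`. -/

open Ideal UniqueFactorizationMonoid Multiset
open scoped Finset

theorem Finset.prod_comp_le_prod_pow {ι κ M : Type*} [CommMonoid M] [PartialOrder M]
    [IsOrderedMonoid M] [DecidableEq κ] {s : Finset ι} {t : Finset κ} {g : ι → κ} {f : κ → M}
    {d : ℕ} (hg : ∀ i ∈ s, g i ∈ t) (hf : ∀ k ∈ t, 1 ≤ f k)
    (hd : ∀ k ∈ t, #{i ∈ s | g i = k} ≤ d) :
    ∏ i ∈ s, f (g i) ≤ (∏ k ∈ t, f k) ^ d := by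
  have hst : s.image g ⊆ t := Finset.image_subset_iff.2 hg
  rw [Finset.prod_comp, ← Finset.prod_pow]
  calc ∏ k ∈ s.image g, f k ^ #{i ∈ s | g i = k}
      ≤ ∏ k ∈ s.image g, f k ^ d :=
        Finset.prod_le_prod' fun k hk => pow_le_pow_right' (hf k (hst hk)) (hd k (hst hk))
    _ ≤ ∏ k ∈ t, f k ^ d :=
        Finset.prod_le_prod_of_subset_of_one_le' hst fun k hk _ => one_le_pow_of_one_le' (hf k hk) d

namespace Ideal

theorem ncard_primesOver_le_finrank {R S : Type*} [CommRing R] [IsDomain R] [CommRing S]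
    [Algebra R S] [Module.Finite R S] [Module.Flat R S] (p : Ideal R) [p.IsPrime] :
    (p.primesOver S).ncard ≤ Module.finrank R S := by
  have := (Algebra.QuasiFinite.finite_primesOver (S := S) p).fintype
  rw [← sum_ramification_inertia_eq_finrank p S, ← Nat.card_coe_set_eq,
    Nat.card_eq_fintype_card, Fintype.card_eq_sum_ones]
  exact Finset.sum_le_sum fun q _ => Nat.mul_pos (ramificationIdx_pos q.1 R) (inertiaDeg_pos q.1 R)

theorem pow_dvd_iff_le_count_normalizedFactors {S : Type*} [CommRing S] [IsDedekindDomain S]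
    {𝔭 I : Ideal S} [𝔭.IsPrime] (h𝔭 : 𝔭 ≠ ⊥) (hI : I ≠ ⊥) {n : ℕ} :
    𝔭 ^ n ∣ I ↔ n ≤ count 𝔭 (normalizedFactors I) := by
  rw [pow_dvd_iff_le_emultiplicity, emultiplicity_eq_count_normalizedFactors
    (prime_of_isPrime h𝔭 ‹_›).irreducible hI, normalize_eq, Nat.cast_le]

section relNorm

variable {R S : Type*} [CommRing R] [IsDedekindDomain R] [CommRing S] [IsDedekindDomain S]
  [Algebra R S] [Module.Finite R S] [Module.IsTorsionFree R S]

theorem exists_pos_relNorm_eq_pow (𝔮 : Ideal S) [𝔮.IsPrime] (𝔭 : Ideal R) [𝔮.LiesOver 𝔭] :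
    ∃ s, 0 < s ∧ relNorm R 𝔮 = 𝔭 ^ s := by
  have : 𝔭.IsPrime := LiesOver.over (P := 𝔮) (p := 𝔭) ▸ inferInstance
  obtain ⟨s, hs⟩ := exists_relNorm_eq_pow_of_isPrime 𝔮 𝔭
  refine ⟨s, Nat.pos_of_ne_zero fun h0 => IsPrime.ne_top ‹𝔭.IsPrime› ?_, hs⟩
  rw [eq_top_iff, ← one_eq_top, ← pow_zero 𝔭, ← h0, ← hs, LiesOver.over (P := 𝔮) (p := 𝔭)]
  exact relNorm_le_comap R 𝔮

theorem exists_mem_primesOver_le_of_relNorm_le {I : Ideal S} (hI : I ≠ ⊥) {𝔭 : Ideal R}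
    [𝔭.IsMaximal] (h : relNorm R I ≤ 𝔭) : ∃ 𝔮 ∈ 𝔭.primesOver S, I ≤ 𝔮 := by
  rw [← prod_normalizedFactors_eq_self hI, map_multiset_prod,
    IsPrime.multiset_prod_le inferInstance] at h
  obtain ⟨_, h𝔮mem, h𝔮𝔭⟩ := h
  obtain ⟨𝔮, h𝔮, rfl⟩ := Multiset.mem_map.mp h𝔮mem
  obtain ⟨_, hI𝔮⟩ := (mem_normalizedFactors_iff hI).mp h𝔮
  have : 𝔮.IsMaximal := IsPrime.isMaximal ‹_› (ne_zero_of_mem_normalizedFactors h𝔮)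
  have : (𝔮.under R).IsMaximal := IsMaximal.under R 𝔮
  obtain ⟨s, _, hs⟩ := exists_pos_relNorm_eq_pow 𝔮 (𝔮.under R)
  have h𝔭 : 𝔭 = 𝔮.under R :=
    (this.eq_of_le (IsPrime.ne_top inferInstance) (IsPrime.le_of_pow_le (hs ▸ h𝔮𝔭))).symm
  exact ⟨𝔮, ⟨inferInstance, ⟨h𝔭⟩⟩, hI𝔮⟩

theorem count_normalizedFactors_le_count_relNorm {I : Ideal S} (hI : I ≠ ⊥) {𝔭 : Ideal R}
    (h𝔭 : 𝔭 ≠ ⊥) {𝔮 : Ideal S} (h𝔮 : 𝔮 ∈ 𝔭.primesOver S) :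
    count 𝔮 (normalizedFactors I) ≤ count 𝔭 (normalizedFactors (relNorm R I)) := by
  obtain ⟨_, _⟩ := h𝔮
  have : 𝔭.IsPrime := LiesOver.over (P := 𝔮) (p := 𝔭) ▸ inferInstance
  obtain ⟨s, hs, h𝔮𝔭⟩ := exists_pos_relNorm_eq_pow 𝔮 𝔭
  set k := count 𝔮 (normalizedFactors I)
  rw [← pow_dvd_iff_le_count_normalizedFactors h𝔭 (relNorm_eq_bot_iff.not.mpr hI)]
  calc 𝔭 ^ k ∣ (𝔭 ^ s) ^ k := pow_dvd_pow_of_dvd (dvd_pow_self 𝔭 hs.ne') k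
    _ = relNorm R (𝔮 ^ k) := by rw [map_pow, h𝔮𝔭]
    _ ∣ relNorm R I := map_dvd _ ((pow_dvd_iff_le_count_normalizedFactors
        (ne_bot_of_liesOver_of_ne_bot h𝔭 𝔮) hI).mpr le_rfl)

theorem eq_top_of_relNorm_eq_of_sup_eq_top
    (h2 : ∀ 𝔭 : Ideal R, 𝔭.IsMaximal → (𝔭.primesOver S).ncard ≤ 2) {I J : Ideal S}
    (hI : I ≠ ⊥) (hJ : J ≠ ⊥) (hIJ : I ⊔ J = ⊤) (hN : relNorm R I = relNorm R J)
    (hcount : ∀ 𝔭 ∈ normalizedFactors (relNorm R I), ∃ 𝔮 ∈ 𝔭.primesOver S,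
      count 𝔮 (normalizedFactors I) = count 𝔮 (normalizedFactors J)) :
    I = ⊤ := by
  by_contra hItop
  obtain ⟨𝔮, _, hI𝔮⟩ := exists_le_maximal I hItop
  have : (𝔮.under R).IsMaximal := IsMaximal.under R 𝔮
  have hI𝔭 : relNorm R I ≤ 𝔮.under R := (relNorm_mono R hI𝔮).trans (relNorm_le_comap R 𝔮)
  obtain ⟨𝔮', h𝔮', hJ𝔮'⟩ := exists_mem_primesOver_le_of_relNorm_le hJ (hN ▸ hI𝔭)
  obtain ⟨𝔮₀, h𝔮₀, hcount₀⟩ := hcount _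
    ((mem_normalizedFactors_iff (relNorm_eq_bot_iff.not.mpr hI)).mpr ⟨inferInstance, hI𝔭⟩)
  have hle_iff : I ≤ 𝔮₀ ↔ J ≤ 𝔮₀ := by
    have := h𝔮₀.1
    rw [← and_iff_right (b := I ≤ 𝔮₀) this, ← and_iff_right (b := J ≤ 𝔮₀) this,
      ← mem_normalizedFactors_iff hI, ← mem_normalizedFactors_iff hJ, ← count_pos, ← count_pos,
      hcount₀]
  have not_le_both : ∀ 𝔯 : Ideal S, 𝔯.IsPrime → I ≤ 𝔯 → J ≤ 𝔯 → False := fun 𝔯 h𝔯 hI hJ =>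
    h𝔯.ne_top (top_le_iff.mp (hIJ ▸ sup_le hI hJ))
  have h𝔮𝔮' : 𝔮 ≠ 𝔮' := by
    rintro rfl
    exact not_le_both 𝔮 inferInstance hI𝔮 hJ𝔮'
  have h𝔮₀ : 𝔮₀ = 𝔮 ∨ 𝔮₀ = 𝔮' := by
    by_contra! h
    refine (h2 _ this).not_gt ((Set.two_lt_ncard_iff (Algebra.QuasiFinite.finite_primesOver _)).mpr
      ⟨𝔮, 𝔮', 𝔮₀, ⟨inferInstance, ⟨rfl⟩⟩, h𝔮', h𝔮₀, h𝔮𝔮', Ne.symm h.1, Ne.symm h.2⟩)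
  rcases h𝔮₀ with rfl | rfl
  · exact not_le_both _ inferInstance hI𝔮 (hle_iff.mp hI𝔮)
  · exact not_le_both _ h𝔮'.1 (hle_iff.mpr hJ𝔮') hJ𝔮'

theorem eq_of_relNorm_eq_of_count_eq
    (h2 : ∀ 𝔭 : Ideal R, 𝔭.IsMaximal → (𝔭.primesOver S).ncard ≤ 2) {I J : Ideal S}
    (hI : I ≠ ⊥) (hJ : J ≠ ⊥) (hN : relNorm R I = relNorm R J)
    (hcount : ∀ 𝔭 ∈ normalizedFactors (relNorm R I), ∃ 𝔮 ∈ 𝔭.primesOver S,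
      count 𝔮 (normalizedFactors I) = count 𝔮 (normalizedFactors J)) :
    I = J := by
  obtain ⟨I', J', hII', hJJ', hunit⟩ := extract_gcd I J
  set G := gcd I J
  have hG : G ≠ ⊥ := fun h => hI (by rw [hII', h, ← zero_eq_bot, zero_mul])
  have hI' : I' ≠ ⊥ := fun h => hI (by rw [hII', h, ← zero_eq_bot, mul_zero])
  have hJ' : J' ≠ ⊥ := fun h => hJ (by rw [hJJ', h, ← zero_eq_bot, mul_zero])
  have hI'J' : I' ⊔ J' = ⊤ := by rw [← gcd_eq_sup, ← isUnit_iff]; exact hunit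
  have hN' : relNorm R I' = relNorm R J' := mul_left_cancel₀
    (relNorm_eq_bot_iff.not.mpr hG) (by rw [← map_mul, ← map_mul, ← hII', ← hJJ', hN])
  have hcount' : ∀ 𝔭 ∈ normalizedFactors (relNorm R I'), ∃ 𝔮 ∈ 𝔭.primesOver S,
      count 𝔮 (normalizedFactors I') = count 𝔮 (normalizedFactors J') := by
    intro 𝔭 h𝔭
    have : 𝔭 ∈ normalizedFactors (relNorm R I) := by
      rw [hII', map_mul, normalizedFactors_mul (relNorm_eq_bot_iff.not.mpr hG)
        (relNorm_eq_bot_iff.not.mpr hI')]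
      exact mem_add.mpr (Or.inr h𝔭)
    obtain ⟨𝔮, h𝔮, h⟩ := hcount 𝔭 this
    refine ⟨𝔮, h𝔮, ?_⟩
    rw [hII', hJJ', normalizedFactors_mul hG hI', normalizedFactors_mul hG hJ', count_add,
      count_add] at h
    omega
  rw [hII', hJJ', eq_top_of_relNorm_eq_of_sup_eq_top h2 hI' hJ' hI'J' hN' hcount',
    eq_top_of_relNorm_eq_of_sup_eq_top h2 hJ' hI' (sup_comm I' J' ▸ hI'J') hN'.symm
      fun 𝔭 h𝔭 => (hcount' 𝔭 (hN' ▸ h𝔭)).imp fun _ ⟨h𝔮, h⟩ => ⟨h𝔮, h.symm⟩]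

theorem finite_setOf_relNorm_eq_and_ncard_le
    (h2 : ∀ 𝔭 : Ideal R, 𝔭.IsMaximal → (𝔭.primesOver S).ncard ≤ 2) {𝔞 : Ideal R}
    (h𝔞 : 𝔞 ≠ ⊥) :
    {I : Ideal S | relNorm R I = 𝔞}.Finite ∧ {I : Ideal S | relNorm R I = 𝔞}.ncard ≤
      ∏ 𝔭 ∈ (normalizedFactors 𝔞).toFinset, (count 𝔭 (normalizedFactors 𝔞) + 1) := by
  classical
  have hprimes : ∀ 𝔭 ∈ normalizedFactors 𝔞, ∃ 𝔮, 𝔮 ∈ 𝔭.primesOver S := fun 𝔭 h𝔭 =>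
    have := ((mem_normalizedFactors_iff h𝔞).mp h𝔭).1
    ⟨_, (Classical.arbitrary (𝔭.primesOver S)).2⟩
  choose! Q hQ using hprimes
  set T := (normalizedFactors 𝔞).toFinset.pi fun 𝔭 =>
    Finset.range (count 𝔭 (normalizedFactors 𝔞) + 1)
  let f : Ideal S → ∀ 𝔭 ∈ (normalizedFactors 𝔞).toFinset, ℕ :=
    fun I 𝔭 _ => count (Q 𝔭) (normalizedFactors I)
  have hne : ∀ I : Ideal S, relNorm R I = 𝔞 → I ≠ ⊥ := fun I hI h =>
    h𝔞 (by rw [← hI, h, relNorm_bot])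
  have hmaps : Set.MapsTo f {I | relNorm R I = 𝔞} T := by
    intro I (hI : relNorm R I = 𝔞)
    rw [Finset.mem_coe, Finset.mem_pi]
    intro 𝔭 h𝔭
    rw [Multiset.mem_toFinset] at h𝔭
    rw [Finset.mem_range, Nat.lt_succ_iff, ← hI]
    exact count_normalizedFactors_le_count_relNorm (hne I hI)
      (ne_zero_of_mem_normalizedFactors h𝔭) (hQ 𝔭 h𝔭)
  have hinj : Set.InjOn f {I | relNorm R I = 𝔞} := by
    intro I (hI : relNorm R I = 𝔞) J (hJ : relNorm R J = 𝔞) hIJ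
    refine eq_of_relNorm_eq_of_count_eq h2 (hne I hI) (hne J hJ) (hI.trans hJ.symm)
      fun 𝔭 h𝔭 => ?_
    rw [hI] at h𝔭
    exact ⟨Q 𝔭, hQ 𝔭 h𝔭, congr_fun₂ hIJ 𝔭 (Multiset.mem_toFinset.mpr h𝔭)⟩
  refine ⟨Set.Finite.of_injOn hmaps hinj T.finite_toSet, ?_⟩
  calc _ ≤ (T : Set _).ncard :=
        Set.ncard_le_ncard_of_injOn f (fun _ h => hmaps h) hinj T.finite_toSet
    _ = _ := by simp [T, Finset.card_pi]

end relNorm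

section absNorm

theorem card_filter_absNorm_under_eq_le {S : Type*} [CommRing S] [Module.Finite ℤ S]
    [Module.Flat ℤ S] (s : Finset (Ideal S)) (hs : ∀ 𝔭 ∈ s, 𝔭.IsPrime) (q : ℕ) :
    #{𝔭 ∈ s | absNorm (under ℤ 𝔭) = q} ≤ Module.finrank ℤ S := by
  rcases Finset.eq_empty_or_nonempty {𝔭 ∈ s | absNorm (under ℤ 𝔭) = q} with h | ⟨𝔭₀, h𝔭₀⟩
  · simp [h]
  obtain ⟨h𝔭₀s, h𝔭₀q⟩ := Finset.mem_filter.mp h𝔭₀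
  have := hs 𝔭₀ h𝔭₀s
  refine le_trans ?_ (ncard_primesOver_le_finrank (under ℤ 𝔭₀))
  rw [← Set.ncard_coe_finset]
  refine Set.ncard_le_ncard (fun 𝔭 h𝔭 => ?_) (Algebra.QuasiFinite.finite_primesOver _)
  obtain ⟨h𝔭s, h𝔭q⟩ := Finset.mem_filter.mp h𝔭
  refine ⟨hs 𝔭 h𝔭s, ⟨?_⟩⟩
  rw [← Int.ideal_span_absNorm_eq_self (under ℤ 𝔭), ← Int.ideal_span_absNorm_eq_self (under ℤ 𝔭₀),
    h𝔭q, h𝔭₀q]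

variable {S : Type*} [CommRing S] [IsDedekindDomain S] [Module.Free ℤ S] [Module.Finite ℤ S]

theorem count_normalizedFactors_le_factorization_absNorm {𝔞 𝔭 : Ideal S} (h𝔞 : 𝔞 ≠ ⊥)
    (h𝔭 : 𝔭 ∈ normalizedFactors 𝔞) :
    count 𝔭 (normalizedFactors 𝔞) ≤ (absNorm 𝔞).factorization (absNorm (under ℤ 𝔭)) := by
  have := ((mem_normalizedFactors_iff h𝔞).mp h𝔭).1
  have h𝔭0 : 𝔭 ≠ ⊥ := ne_zero_of_mem_normalizedFactors h𝔭
  have : NeZero 𝔭 := ⟨h𝔭0⟩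
  set p := absNorm (under ℤ 𝔭)
  set k := count 𝔭 (normalizedFactors 𝔞)
  rw [← (Nat.absNorm_under_prime 𝔭).pow_dvd_iff_le_factorization (absNorm_eq_zero_iff.not.mpr h𝔞)]
  calc p ^ k ∣ (p ^ 𝔭.inertiaDeg ℤ) ^ k :=
        pow_dvd_pow_of_dvd (dvd_pow_self p (inertiaDeg_pos 𝔭 ℤ).ne') k
    _ = absNorm (𝔭 ^ k) := by rw [absNorm_pow_inertiaDeg (under ℤ 𝔭) 𝔭, map_pow]
    _ ∣ absNorm 𝔞 := map_dvd absNorm ((pow_dvd_iff_le_count_normalizedFactors h𝔭0 h𝔞).mpr le_rfl)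

theorem prod_count_normalizedFactors_add_one_le {𝔞 : Ideal S} (h𝔞 : 𝔞 ≠ ⊥) :
    ∏ 𝔭 ∈ (normalizedFactors 𝔞).toFinset, (count 𝔭 (normalizedFactors 𝔞) + 1) ≤
      (absNorm 𝔞).divisors.card ^ Module.finrank ℤ S := by
  classical
  have hcount := fun 𝔭 (h𝔭 : 𝔭 ∈ (normalizedFactors 𝔞).toFinset) =>
    count_normalizedFactors_le_factorization_absNorm h𝔞 (mem_toFinset.mp h𝔭)
  rw [Nat.card_divisors (absNorm_eq_zero_iff.not.mpr h𝔞)]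
  calc _ ≤ ∏ 𝔭 ∈ (normalizedFactors 𝔞).toFinset,
        ((absNorm 𝔞).factorization (absNorm (under ℤ 𝔭)) + 1) :=
        Finset.prod_le_prod' fun 𝔭 h𝔭 => Nat.succ_le_succ (hcount 𝔭 h𝔭)
    _ ≤ _ := by
      refine Finset.prod_comp_le_prod_pow (fun 𝔭 h𝔭 => ?_) (fun _ _ => Nat.le_add_left 1 _)
        fun q _ => card_filter_absNorm_under_eq_le _ (fun 𝔭 h𝔭 =>
          ((mem_normalizedFactors_iff h𝔞).mp (mem_toFinset.mp h𝔭)).1) q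
      rw [← Nat.support_factorization, Finsupp.mem_support_iff]
      have := count_pos.mpr (mem_toFinset.mp h𝔭)
      have := hcount 𝔭 h𝔭
      omega

end absNorm

end Ideal

theorem card_ideals_with_relNorm_le_general
    (F E : Type*) [Field F] [Field E] [NumberField F] [NumberField E] [Algebra F E]
    (hquad : Module.finrank F E = 2)
    [Module.Finite (𝓞 F) (𝓞 E)]
    (𝔞 : Ideal (𝓞 F)) (h𝔞 : 𝔞 ≠ ⊥) :
    {𝔟 : Ideal (𝓞 E) | Ideal.relNorm (𝓞 F) 𝔟 = 𝔞}.Finite ∧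
    {𝔟 : Ideal (𝓞 E) | Ideal.relNorm (𝓞 F) 𝔟 = 𝔞}.ncard ≤
      (Ideal.absNorm 𝔞).divisors.card ^ Module.finrank ℚ F := by
  have h2 : ∀ 𝔭 : Ideal (𝓞 F), 𝔭.IsMaximal → (𝔭.primesOver (𝓞 E)).ncard ≤ 2 := fun 𝔭 _ =>
    (ncard_primesOver_le_finrank 𝔭).trans
      (by rw [← IsFractionRing.finrank_eq (𝓞 F) F (𝓞 E) E, hquad])
  obtain ⟨hfinite, hcard⟩ := finite_setOf_relNorm_eq_and_ncard_le (S := 𝓞 E) h2 h𝔞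
  refine ⟨hfinite, hcard.trans ?_⟩
  rw [← RingOfIntegers.rank F]
  exact prod_count_normalizedFactors_add_one_le h𝔞

/-- Estimate (eqn:divisor) in the proof of Lemma 6.2 (lemQ): for a quadratic extension `E/F`
of number fields and a nonzero ideal `𝔞` of `O_F`, the number of ideals `𝔟` of `O_E` with
relative norm `N_{E/F}(𝔟) = 𝔞` is at most `σ₀(N(𝔞))^{[F:ℚ]}`. -/
theorem card_ideals_with_relNorm_le
    (F E : Type*) [Field F] [Field E] [NumberField F] [NumberField E] [Algebra F E]
    (hquad : Module.finrank F E = 2)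
    [Module.Finite (𝓞 F) (𝓞 E)] [Module.Free (𝓞 F) (𝓞 E)]
    (𝔞 : Ideal (𝓞 F)) (h𝔞 : 𝔞 ≠ ⊥) :
    {𝔟 : Ideal (𝓞 E) | Ideal.relNorm (𝓞 F) 𝔟 = 𝔞}.Finite ∧
    {𝔟 : Ideal (𝓞 E) | Ideal.relNorm (𝓞 F) 𝔟 = 𝔞}.ncard ≤
      (Ideal.absNorm 𝔞).divisors.card ^ Module.finrank ℚ F :=
  card_ideals_with_relNorm_le_general F E hquad 𝔞 h𝔞
end
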